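/- arXiv:1712.06308 — 13 statements merged into one kernel-verified Lean document; each statement's English description precedes it below -/
import Mathlib

section
/- Let V be a finite vertex set with an irreflexive adjacency relation E : V → V → Prop such that every vertex has at most r vertices w with E v w ∧ E w v (undirected neighbours) and at most z vertices w with E v w ∧ ¬E w v (purely directed out-neighbours), and suppose that for all distinct u, v ∈ V either E u v holds or there exists w with E u w ∧ E w v (diameter at most 2). Then |V| ≤ (z + r)² + z + 1. -/
/-- The Moore bound for mixed graphs of diameter 2: a mixed graph with
undirected degree at most `r`, directed out-degree at most `z`, and diameter
at most 2 has at most `(z + r)^2 + z + 1` vertices. -/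
theorem mixed_moore_bound {V : Type*} [Fintype V] [DecidableEq V]
    (E : V → V → Prop) [DecidableRel E] (r z : ℕ)
    (hirr : ∀ v : V, ¬ E v v)
    (hund : ∀ v : V, (Finset.univ.filter fun w => E v w ∧ E w v).card ≤ r)
    (hdir : ∀ v : V, (Finset.univ.filter fun w => E v w ∧ ¬ E w v).card ≤ z)
    (hdiam : ∀ u v : V, u ≠ v → E u v ∨ ∃ w : V, E u w ∧ E w v) :
    Fintype.card V ≤ (z + r) ^ 2 + z + 1 := by
  rcases isEmpty_or_nonempty V with h | h
  · simp [Fintype.card_eq_zero]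
  obtain ⟨v⟩ := h
  set N : V → Finset V := fun w => Finset.univ.filter (fun x => E w x) with hN
  have hNcard : ∀ w : V, (N w).card ≤ z + r := by
    intro w
    have hsub : N w ⊆ (Finset.univ.filter fun x => E w x ∧ ¬ E x w)
        ∪ (Finset.univ.filter fun x => E w x ∧ E x w) := by
      intro x hx
      simp only [hN, Finset.mem_filter, Finset.mem_univ, true_and] at hx
      by_cases hxw : E x w <;> simp [Finset.mem_union, hx, hxw]
    calc (N w).card ≤ _ := Finset.card_le_card hsub
      _ ≤ _ + _ := Finset.card_union_le _ _
      _ ≤ z + r := Nat.add_le_add (hdir w) (hund w)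
  have hcover : (Finset.univ : Finset V) ⊆
      insert v ((N v) ∪ (N v).biUnion (fun w => (N w).erase v)) := by
    intro u _
    by_cases huv : u = v
    · simp [huv]
    rcases hdiam v u (Ne.symm huv) with hE | ⟨w, hvw, hwu⟩
    · simp [N, Finset.mem_insert, hE]
    · simp only [Finset.mem_insert, Finset.mem_union, Finset.mem_biUnion]
      right; right
      exact ⟨w, by simp [N, hvw], by simp [N, Finset.mem_erase, huv, hwu]⟩
  have hsum : ∑ w ∈ N v, ((N w).erase v).card ≤ r * (z + r - 1) + z * (z + r) := by
    have hsplit : N v ⊆ (Finset.univ.filter fun w => E v w ∧ E w v)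
        ∪ (Finset.univ.filter fun w => E v w ∧ ¬ E w v) := by
      intro x hx
      simp only [hN, Finset.mem_filter, Finset.mem_univ, true_and] at hx
      by_cases hxv : E x v <;> simp [hx, hxv]
    have hdisj : Disjoint (Finset.univ.filter fun w => E v w ∧ E w v)
        (Finset.univ.filter fun w => E v w ∧ ¬ E w v) := by
      rw [Finset.disjoint_left]
      intro a ha hb
      simp only [Finset.mem_filter] at ha hb
      exact hb.2.2 ha.2.2
    calc ∑ w ∈ N v, ((N w).erase v).card
        ≤ ∑ w ∈ (Finset.univ.filter fun w => E v w ∧ E w v)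
            ∪ (Finset.univ.filter fun w => E v w ∧ ¬ E w v), ((N w).erase v).card := by
          exact Finset.sum_le_sum_of_subset hsplit
      _ = ∑ w ∈ (Finset.univ.filter fun w => E v w ∧ E w v), ((N w).erase v).card
          + ∑ w ∈ (Finset.univ.filter fun w => E v w ∧ ¬ E w v), ((N w).erase v).card :=
          Finset.sum_union hdisj
      _ ≤ r * (z + r - 1) + z * (z + r) := by
          apply Nat.add_le_add
          · calc ∑ w ∈ (Finset.univ.filter fun w => E v w ∧ E w v), ((N w).erase v).card
                ≤ ∑ _w ∈ (Finset.univ.filter fun w => E v w ∧ E w v), (z + r - 1) := by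
                  apply Finset.sum_le_sum
                  intro w hw
                  simp only [Finset.mem_filter] at hw
                  have hvN : v ∈ N w := by simp [N, hw.2.2]
                  have := Finset.card_erase_of_mem hvN
                  rw [this]
                  exact Nat.sub_le_sub_right (hNcard w) 1
              _ ≤ r * (z + r - 1) := by
                  rw [Finset.sum_const, smul_eq_mul]
                  exact Nat.mul_le_mul_right _ (hund v)
          · calc ∑ w ∈ (Finset.univ.filter fun w => E v w ∧ ¬ E w v), ((N w).erase v).card
                ≤ ∑ _w ∈ (Finset.univ.filter fun w => E v w ∧ ¬ E w v), (z + r) := by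
                  apply Finset.sum_le_sum
                  intro w _
                  exact le_trans (Finset.card_le_card (Finset.erase_subset _ _)) (hNcard w)
              _ ≤ z * (z + r) := by
                  rw [Finset.sum_const, smul_eq_mul]
                  exact Nat.mul_le_mul_right _ (hdir v)
  have hmain : Fintype.card V ≤ 1 + ((z + r) + (r * (z + r - 1) + z * (z + r))) := by
    calc Fintype.card V = (Finset.univ : Finset V).card := rfl
      _ ≤ (insert v ((N v) ∪ (N v).biUnion (fun w => (N w).erase v))).card :=
          Finset.card_le_card hcover
      _ ≤ ((N v) ∪ (N v).biUnion (fun w => (N w).erase v)).card + 1 :=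
          Finset.card_insert_le _ _
      _ ≤ ((N v).card + ((N v).biUnion (fun w => (N w).erase v)).card) + 1 :=
          Nat.add_le_add_right (Finset.card_union_le _ _) 1
      _ ≤ ((z + r) + ∑ w ∈ N v, ((N w).erase v).card) + 1 :=
          Nat.add_le_add_right (Nat.add_le_add (hNcard v) (Finset.card_biUnion_le)) 1
      _ ≤ _ := by omega
  refine le_trans hmain ?_
  rcases r with _ | r
  · simp; nlinarith
  · have : z + (r + 1) - 1 = z + r := by omega
    rw [this]; ring_nf; nlinarith
end

section
/- Let Γ be a mixed Moore graph of diameter 2 with undirected degree r and directed degree z, given by an irreflexive relation E on a finite vertex set V. Then for every pair of distinct vertices u, v there is exactly one path of length 1 or 2 from u to v; precisely: it is not the case that both E u v holds and there exists w with E u w ∧ E w v, and moreover either E u v holds or there exists a unique w with E u w ∧ E w v. -/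
/-- In a mixed Moore graph of diameter 2, for every pair of distinct vertices
`u, v` there is exactly one path of length 1 or 2 from `u` to `v`. -/
theorem mixed_moore_unique_path {V : Type*} [Fintype V] [DecidableEq V]
    (E : V → V → Prop) [DecidableRel E] (r z : ℕ)
    (hirr : ∀ v : V, ¬ E v v)
    (hund : ∀ v : V, (Finset.univ.filter fun w => E v w ∧ E w v).card = r)
    (hdir : ∀ v : V, (Finset.univ.filter fun w => E v w ∧ ¬ E w v).card = z)
    (hdiam : ∀ u v : V, u ≠ v → E u v ∨ ∃ w : V, E u w ∧ E w v)
    (hcard : Fintype.card V = (z + r) ^ 2 + z + 1) :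
    ∀ u v : V, u ≠ v →
      (¬ (E u v ∧ ∃ w : V, E u w ∧ E w v)) ∧
      (E u v ∨ ∃! w : V, E u w ∧ E w v) := by
  -- total out-degree of every vertex is z + r
  have outdeg : ∀ v : V, (Finset.univ.filter fun w => E v w).card = z + r := by
    intro v
    have h := Finset.card_filter_add_card_filter_not
      (s := Finset.univ.filter fun w => E v w) (p := fun w => E w v)
    rw [Finset.filter_filter, Finset.filter_filter, hund v, hdir v] at h
    omega
  intro u v huv
  -- the path-counting function from u
  set g : V → ℕ := fun x =>
    (if E u x then 1 else 0) + (Finset.univ.filter fun w => E u w ∧ E w x).card with hg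
  have hgx : ∀ x : V, g x =
      (if E u x then 1 else 0) + (Finset.univ.filter fun w => E u w ∧ E w x).card := by
    intro x; rw [hg]
  set s : Finset V := Finset.univ.erase u with hsdef
  have hus : u ∉ s := Finset.notMem_erase u _
  have hins : (Finset.univ : Finset V) = insert u s := by
    rw [hsdef, Finset.insert_erase (Finset.mem_univ u)]
  have hscard : s.card = (z + r) ^ 2 + z := by
    rw [hsdef, Finset.card_erase_of_mem (Finset.mem_univ u), Finset.card_univ, hcard]
    omega
  -- compute the total number of paths of length ≤ 2 from u over all vertices
  have hT : ∑ x ∈ Finset.univ, (Finset.univ.filter fun w => E u w ∧ E w x).card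
      = (z + r) * (z + r) := by
    have h1 : ∀ x : V, (Finset.univ.filter fun w => E u w ∧ E w x).card
        = ∑ w ∈ Finset.univ, if E u w ∧ E w x then 1 else 0 := by
      intro x; rw [Finset.card_filter]
    simp_rw [h1]
    rw [Finset.sum_comm]
    have h2 : ∀ w : V, (∑ x ∈ Finset.univ, if E u w ∧ E w x then 1 else 0)
        = if E u w then z + r else 0 := by
      intro w
      by_cases hw : E u w
      · simp only [hw, true_and, if_true]
        rw [← Finset.card_filter, outdeg w]
      · simp [hw]
    simp_rw [h2]
    rw [Finset.sum_ite, Finset.sum_const, Finset.sum_const_zero, add_zero]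
    rw [outdeg u, smul_eq_mul]
  have hsumuniv : ∑ x ∈ Finset.univ, g x = (z + r) + (z + r) * (z + r) := by
    simp_rw [hgx]
    rw [Finset.sum_add_distrib, hT, ← Finset.card_filter, outdeg u]
  have hgu : g u = r := by
    rw [hgx u]
    simp only [hirr u, if_false, zero_add]
    exact hund u
  have hsums : ∑ x ∈ s, g x = (z + r) ^ 2 + z := by
    have h := hsumuniv
    rw [hins, Finset.sum_insert hus, hgu] at h
    nlinarith [h]
  -- each vertex in s has at least one path
  have hge : ∀ x ∈ s, 1 ≤ g x := by
    intro x hx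
    have hxu : u ≠ x := fun h => hus (h ▸ hx)
    rcases hdiam u x hxu with h | ⟨w, hw1, hw2⟩
    · rw [hgx x, if_pos h]; omega
    · rw [hgx x]
      have hpos : 0 < (Finset.univ.filter fun w => E u w ∧ E w x).card :=
        Finset.card_pos.2 ⟨w, Finset.mem_filter.2 ⟨Finset.mem_univ w, hw1, hw2⟩⟩
      omega
  -- hence each vertex in s has exactly one path
  have hone : ∀ x ∈ s, g x = 1 := by
    by_contra hne
    push_neg at hne
    obtain ⟨x, hx, hxne⟩ := hne
    have h2 : 2 ≤ g x := by have := hge x hx; omega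
    have hlt : s.card + 1 ≤ ∑ y ∈ s, g y := by
      have : ∑ y ∈ s, g y = ∑ y ∈ s.erase x, g y + g x :=
        (Finset.sum_erase_add s g hx).symm
      rw [this]
      have h3 : (s.erase x).card ≤ ∑ y ∈ s.erase x, g y := by
        calc (s.erase x).card = ∑ _y ∈ s.erase x, 1 := by
              rw [Finset.sum_const, smul_eq_mul, mul_one]
          _ ≤ ∑ y ∈ s.erase x, g y := by
              apply Finset.sum_le_sum
              intro y hy
              exact hge y (Finset.mem_of_mem_erase hy)
      have h4 : (s.erase x).card = s.card - 1 := Finset.card_erase_of_mem hx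
      have h5 : 1 ≤ s.card := Finset.card_pos.2 ⟨x, hx⟩
      omega
    rw [hsums, hscard] at hlt
    omega
  have hv : v ∈ s := Finset.mem_erase.2 ⟨huv.symm, Finset.mem_univ v⟩
  have h1 := hone v hv
  rw [hgx v] at h1
  by_cases hEuv : E u v
  · rw [if_pos hEuv] at h1
    have hc0 : (Finset.univ.filter fun w => E u w ∧ E w v).card = 0 := by omega
    have hempty := Finset.card_eq_zero.1 hc0
    constructor
    · rintro ⟨-, w, hw1, hw2⟩
      have : w ∈ Finset.univ.filter fun w => E u w ∧ E w v :=
        Finset.mem_filter.2 ⟨Finset.mem_univ w, hw1, hw2⟩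
      rw [hempty] at this
      exact absurd this (Finset.notMem_empty w)
    · exact Or.inl hEuv
  · rw [if_neg hEuv] at h1
    have hc1 : (Finset.univ.filter fun w => E u w ∧ E w v).card = 1 := by omega
    obtain ⟨w, hw⟩ := Finset.card_eq_one.1 hc1
    have hwmem : w ∈ Finset.univ.filter fun w => E u w ∧ E w v := by
      rw [hw]; exact Finset.mem_singleton_self w
    have hwE := (Finset.mem_filter.1 hwmem).2
    constructor
    · rintro ⟨h, -⟩; exact hEuv h
    · refine Or.inr ⟨w, hwE, fun y hy => ?_⟩
      have hmem : y ∈ Finset.univ.filter fun w => E u w ∧ E w v :=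
        Finset.mem_filter.2 ⟨Finset.mem_univ y, hy⟩
      rw [hw] at hmem
      exact Finset.mem_singleton.1 hmem
end

section
/- Let Γ be a mixed Moore graph of diameter 2 with undirected degree r and directed degree z, given by an irreflexive relation E on a finite vertex set V, and write U a b for the undirected adjacency E a b ∧ E b a. Then Γ contains no undirected cycle of length 3 or 4: there do not exist pairwise distinct vertices a, b, c with U a b, U b c and U c a, and there do not exist pairwise distinct vertices a, b, c, d with U a b, U b c, U c d and U d a. -/
open Finset

/-- Key counting lemma: in a mixed Moore graph of diameter 2, for any vertex `v`
and any `x ≠ v`, if `E v x` then there is no 2-path from `v` to `x`, and if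
`¬ E v x` there is exactly one. -/
lemma mixed_moore_key {V : Type*} [Fintype V] [DecidableEq V]
    (E : V → V → Prop) [DecidableRel E] (r z : ℕ)
    (hirr : ∀ v : V, ¬ E v v)
    (hund : ∀ v : V, (Finset.univ.filter fun w => E v w ∧ E w v).card = r)
    (hdir : ∀ v : V, (Finset.univ.filter fun w => E v w ∧ ¬ E w v).card = z)
    (hdiam : ∀ u v : V, u ≠ v → E u v ∨ ∃ w : V, E u w ∧ E w v)
    (hcard : Fintype.card V = (z + r) ^ 2 + z + 1)
    (v x : V) (hxv : x ≠ v) :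
    (Finset.univ.filter fun w => E v w ∧ E w x).card = if E v x then 0 else 1 := by
  -- total out-degree
  have hdeg : ∀ w : V, (Finset.univ.filter fun y => E w y).card = z + r := by
    intro w
    have h := Finset.card_filter_add_card_filter_not
      (s := Finset.univ.filter fun y => E w y) (p := fun y => E y w)
    rw [Finset.filter_filter, Finset.filter_filter] at h
    rw [hund w, hdir w] at h
    omega
  set P : V → ℕ := fun y => (Finset.univ.filter fun w => E v w ∧ E w y).card with hP
  -- total number of 2-paths from v
  have hPsum : ∑ y : V, P y = (z + r) * (z + r) := by
    have h1 : ∀ y : V, P y = ∑ w : V, if E v w ∧ E w y then 1 else 0 := by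
      intro y; exact Finset.card_filter _ _
    calc ∑ y : V, P y = ∑ y : V, ∑ w : V, if E v w ∧ E w y then 1 else 0 := by
            exact Finset.sum_congr rfl fun y _ => h1 y
      _ = ∑ w : V, ∑ y : V, if E v w ∧ E w y then 1 else 0 := Finset.sum_comm
      _ = ∑ w : V, if E v w then (z + r) else 0 := by
            refine Finset.sum_congr rfl fun w _ => ?_
            by_cases h : E v w
            · simp only [h, true_and, if_true]
              rw [← hdeg w, Finset.card_filter]
            · simp [h]
      _ = (z + r) * (z + r) := by
            rw [← Finset.sum_filter, Finset.sum_const, smul_eq_mul, hdeg v, Nat.mul_comm]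
  set A : Finset V := Finset.univ.filter fun y => E v y with hA
  set B : Finset V := Finset.univ.filter fun y => ¬ E v y ∧ y ≠ v with hB
  have hAerase : (Finset.univ.erase v).filter (fun y => E v y) = A := by
    ext y
    simp only [hA, Finset.mem_filter, Finset.mem_erase, Finset.mem_univ, and_true, true_and]
    constructor
    · rintro ⟨_, h⟩; exact h
    · intro h; refine ⟨?_, h⟩; rintro rfl; exact hirr _ h
  have hBerase : (Finset.univ.erase v).filter (fun y => ¬ E v y) = B := by
    ext y
    simp only [hB, Finset.mem_filter, Finset.mem_erase, Finset.mem_univ, and_true, true_and]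
    tauto
  -- split the sum
  have hsplit : ∑ y : V, P y = P v + (∑ y ∈ A, P y + ∑ y ∈ B, P y) := by
    rw [← Finset.sum_erase_add Finset.univ P (Finset.mem_univ v),
        ← Finset.sum_filter_add_sum_filter_not (Finset.univ.erase v) (fun y => E v y) P,
        hAerase, hBerase, Nat.add_comm]
  have hPv : P v = r := hund v
  have hcardA : A.card = z + r := hdeg v
  -- card of B
  have hcardB : A.card + B.card + 1 = (z + r) ^ 2 + z + 1 := by
    have h := Finset.card_filter_add_card_filter_not
      (s := Finset.univ.erase v) (p := fun y => E v y)
    rw [hAerase, hBerase] at h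
    have h2 : (Finset.univ.erase v).card + 1 = Fintype.card V :=
      Finset.card_erase_add_one (Finset.mem_univ v)
    rw [hcard] at h2
    omega
  -- each y ∈ B has at least one 2-path
  have hB1 : ∀ y ∈ B, 1 ≤ P y := by
    intro y hy
    simp only [hB, Finset.mem_filter, Finset.mem_univ, true_and] at hy
    rcases hdiam v y (fun h => hy.2 h.symm) with h | ⟨w, hw1, hw2⟩
    · exact absurd h hy.1
    · exact Finset.card_pos.mpr ⟨w, by simp [hP, hw1, hw2]⟩
  have hBsum : B.card ≤ ∑ y ∈ B, P y := by
    calc B.card = ∑ _y ∈ B, 1 := by simp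
      _ ≤ ∑ y ∈ B, P y := Finset.sum_le_sum hB1
  -- the square as an atom for omega
  obtain ⟨M, hM⟩ : ∃ M, (z + r) ^ 2 = M := ⟨_, rfl⟩
  have hmul : (z + r) * (z + r) = M := by rw [← hM]; ring
  rw [hPsum, hPv] at hsplit
  rw [hM] at hcardB
  rw [hmul] at hsplit
  -- conclude exact counts
  have hAzero : ∑ y ∈ A, P y = 0 := by omega
  have hBexact : ∑ y ∈ B, P y = B.card := by omega
  by_cases hvx : E v x
  · -- x ∈ A, so P x = 0
    have hxA : x ∈ A := by simp [hA, hvx]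
    have h0 := (Finset.sum_eq_zero_iff).mp hAzero x hxA
    rw [if_pos hvx]
    exact h0
  · -- x ∈ B, so P x = 1
    have hxB : x ∈ B := by simp [hB, hvx, hxv]
    have hle : P x ≤ 1 := by
      by_contra h
      push_neg at h
      have : ∑ _y ∈ B, 1 < ∑ y ∈ B, P y :=
        Finset.sum_lt_sum hB1 ⟨x, hxB, h⟩
      simp only [Finset.sum_const, smul_eq_mul, mul_one] at this
      omega
    have hge : 1 ≤ P x := hB1 x hxB
    rw [if_neg hvx]
    exact le_antisymm hle hge

/-- A mixed Moore graph of diameter 2 contains no undirected cycle of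
length 3 or 4, where `U a b` denotes the undirected adjacency `E a b ∧ E b a`. -/
theorem mixed_moore_no_short_undirected_cycles {V : Type*} [Fintype V] [DecidableEq V]
    (E : V → V → Prop) [DecidableRel E] (r z : ℕ)
    (hirr : ∀ v : V, ¬ E v v)
    (hund : ∀ v : V, (Finset.univ.filter fun w => E v w ∧ E w v).card = r)
    (hdir : ∀ v : V, (Finset.univ.filter fun w => E v w ∧ ¬ E w v).card = z)
    (hdiam : ∀ u v : V, u ≠ v → E u v ∨ ∃ w : V, E u w ∧ E w v)
    (hcard : Fintype.card V = (z + r) ^ 2 + z + 1)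
    (U : V → V → Prop) (hU : ∀ a b : V, U a b ↔ E a b ∧ E b a) :
    (¬ ∃ a b c : V, a ≠ b ∧ a ≠ c ∧ b ≠ c ∧ U a b ∧ U b c ∧ U c a) ∧
    (¬ ∃ a b c d : V, a ≠ b ∧ a ≠ c ∧ a ≠ d ∧ b ≠ c ∧ b ≠ d ∧ c ≠ d ∧
      U a b ∧ U b c ∧ U c d ∧ U d a) := by
  have key := mixed_moore_key E r z hirr hund hdir hdiam hcard
  constructor
  · rintro ⟨a, b, c, hab, hac, hbc, h1, h2, h3⟩
    rw [hU] at h1 h2 h3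
    have hk := key a c hac.symm
    rw [if_pos h3.2] at hk
    have hbmem : b ∈ Finset.univ.filter fun w => E a w ∧ E w c := by
      simp [h1.1, h2.1]
    have := Finset.card_pos.mpr ⟨b, hbmem⟩
    omega
  · rintro ⟨a, b, c, d, hab, hac, had, hbc, hbd, hcd, h1, h2, h3, h4⟩
    rw [hU] at h1 h2 h3 h4
    have hbmem : b ∈ Finset.univ.filter fun w => E a w ∧ E w c := by
      simp [h1.1, h2.1]
    have hdmem : d ∈ Finset.univ.filter fun w => E a w ∧ E w c := by
      simp [h4.2, h3.2]
    have hk := key a c hac.symm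
    by_cases hvx : E a c
    · rw [if_pos hvx] at hk
      have := Finset.card_pos.mpr ⟨b, hbmem⟩
      omega
    · rw [if_neg hvx] at hk
      exact hbd (Finset.card_le_one.mp hk.le b hbmem d hdmem)
end

section
/- Let Γ be a mixed Moore graph of diameter 2 with undirected degree r and directed degree z, given by an irreflexive relation E on a finite vertex set V. Then Γ is totally regular: for every vertex v, the number of vertices u with E u v ∧ ¬E v u (the directed in-degree of v) equals z. -/
/-!
Every vertex `v` has out-degree `d = r + z`, so there are `d + d²` walks of length one or two
starting at `v`; `r` of them return to `v`, and the order `d² + z + 1` leaves exactly one such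
walk for each of the `d² + z` other vertices. Hence, if `v → u` is an arc and `u → w → v` is the
walk that brings `u` back, then `w → v` is an arc as well (an edge `v w` would give a second walk
`v → u → w`), and distinct `u` give distinct `w`. So the arc in-degree of every vertex is at least
its arc out-degree `z`, and since both sum to the number of arcs, they are equal.
-/

open Finset

namespace MixedMoore

variable {V : Type*} [Fintype V] (E : V → V → Prop) [DecidableRel E]

def shortWalkCount (v u : V) : ℕ :=
  #{w | E v w ∧ E w u} + if E v u then 1 else 0

theorem card_out_eq_card_edges_add_card_arcs (v : V) :
    #{w | E v w} = #{w | E v w ∧ E w v} + #{w | E v w ∧ ¬ E w v} := by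
  simp only [← filter_filter]
  exact (card_filter_add_card_filter_not _).symm

variable {E}

theorem sum_card_midpoints {d : ℕ} (hout : ∀ w, #{x | E w x} = d) (v : V) :
    ∑ u, #{w | E v w ∧ E w u} = d * d :=
  calc ∑ u, #{w | E v w ∧ E w u}
      = ∑ w, #{u | E v w ∧ E w u} :=
        (sum_card_bipartiteAbove_eq_sum_card_bipartiteBelow (s := univ) (t := univ)
          (fun w u => E v w ∧ E w u)).symm
    _ = ∑ w ∈ {w | E v w}, #{u | E w u} := by
        rw [sum_filter]
        refine sum_congr rfl fun w _ => ?_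
        by_cases hvw : E v w <;> simp [hvw]
    _ = d * d := by simp [hout]

theorem sum_shortWalkCount {d : ℕ} (hout : ∀ w, #{x | E w x} = d) (v : V) :
    ∑ u, shortWalkCount E v u = d * d + d := by
  simp only [shortWalkCount, sum_add_distrib, sum_card_midpoints hout, ← card_filter, hout]

theorem shortWalkCount_self (hirr : ∀ v, ¬ E v v) (v : V) :
    shortWalkCount E v v = #{w | E v w ∧ E w v} := by
  simp [shortWalkCount, hirr]

theorem one_le_shortWalkCount {v u : V} (h : E v u ∨ ∃ w, E v w ∧ E w u) :
    1 ≤ shortWalkCount E v u := by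
  rcases h with hvu | ⟨w, hvw, hwu⟩
  · simp [shortWalkCount, hvu]
  · have : 0 < #{w | E v w ∧ E w u} := card_pos.mpr ⟨w, by simp [hvw, hwu]⟩
    unfold shortWalkCount
    omega

/-- `hcard` says that the order attains the Moore bound at `v`: `d² + d + 1` minus the number of
closed walks `v → w → v`. -/
theorem shortWalkCount_eq_one {d : ℕ} (hirr : ∀ v, ¬ E v v) (hout : ∀ w, #{x | E w x} = d)
    (hdiam : ∀ u v : V, u ≠ v → E u v ∨ ∃ w, E u w ∧ E w v) {v : V}
    (hcard : Fintype.card V + #{w | E v w ∧ E w v} = d * d + d + 1) {u : V} (huv : u ≠ v) :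
    shortWalkCount E v u = 1 := by
  classical
  have hge : ∀ x ∈ univ.erase v, 1 ≤ shortWalkCount E v x :=
    fun x hx => one_le_shortWalkCount (hdiam v x (ne_of_mem_erase hx).symm)
  have hsum : ∑ x ∈ univ.erase v, 1 = ∑ x ∈ univ.erase v, shortWalkCount E v x := by
    have := sum_erase_add univ (shortWalkCount E v) (mem_univ v)
    rw [sum_shortWalkCount hout, shortWalkCount_self hirr] at this
    rw [sum_const, card_erase_of_mem (mem_univ v), card_univ, smul_eq_mul, mul_one]
    omega
  exact ((sum_eq_sum_iff_of_le hge).mp hsum u (mem_erase.mpr ⟨huv, mem_univ u⟩)).symm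

theorem not_adj_of_shortWalkCount_eq_one {v m u : V} (h : shortWalkCount E v u = 1)
    (hvm : E v m) (hmu : E m u) : ¬ E v u := by
  intro hvu
  have : 0 < #{w | E v w ∧ E w u} := card_pos.mpr ⟨m, by simp [hvm, hmu]⟩
  simp only [shortWalkCount, hvu, if_true] at h
  omega

theorem eq_of_shortWalkCount_eq_one {v m₁ m₂ u : V} (h : shortWalkCount E v u = 1)
    (hvu : ¬ E v u) (h₁ : E v m₁ ∧ E m₁ u) (h₂ : E v m₂ ∧ E m₂ u) : m₁ = m₂ := by
  simp only [shortWalkCount, hvu, if_false, add_zero, card_eq_one] at h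
  obtain ⟨m, hm⟩ := h
  have hm₁ : m₁ ∈ ({w | E v w ∧ E w u} : Finset V) := by simpa using h₁
  have hm₂ : m₂ ∈ ({w | E v w ∧ E w u} : Finset V) := by simpa using h₂
  rw [hm, mem_singleton] at hm₁ hm₂
  rw [hm₁, hm₂]

theorem card_out_arcs_le_card_in_arcs (hirr : ∀ v, ¬ E v v)
    (hdiam : ∀ u v : V, u ≠ v → E u v ∨ ∃ w, E u w ∧ E w v)
    (hunique : ∀ v u : V, u ≠ v → shortWalkCount E v u = 1) (v : V) :
    #{u | E v u ∧ ¬ E u v} ≤ #{u | E u v ∧ ¬ E v u} := by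
  have hback : ∀ u, ∃ w, E v u ∧ ¬ E u v → E u w ∧ E w v := fun u => by
    by_cases h : E v u ∧ ¬ E u v
    · have huv : u ≠ v := by rintro rfl; exact hirr u h.1
      obtain ⟨w, hw⟩ := (hdiam u v huv).resolve_left h.2
      exact ⟨w, fun _ => hw⟩
    · exact ⟨u, fun h' => absurd h' h⟩
  choose g hg using hback
  have hne : ∀ u, E v u ∧ ¬ E u v → g u ≠ v := fun u hu hgu =>
    hirr v (hgu ▸ (hg u hu).2)
  have harc : ∀ u, E v u ∧ ¬ E u v → ¬ E v (g u) := fun u hu =>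
    not_adj_of_shortWalkCount_eq_one (hunique v (g u) (hne u hu)) hu.1 (hg u hu).1
  refine card_le_card_of_injOn g (fun u hu => ?_) (fun u₁ hu₁ u₂ hu₂ heq => ?_)
  · simp only [coe_filter, Set.mem_ofPred_eq, mem_univ, true_and] at hu ⊢
    exact ⟨(hg u hu).2, harc u hu⟩
  · simp only [coe_filter, Set.mem_ofPred_eq, mem_univ, true_and] at hu₁ hu₂
    refine eq_of_shortWalkCount_eq_one (hunique v (g u₂) (hne u₂ hu₂)) (harc u₂ hu₂)
      ⟨hu₁.1, heq ▸ (hg u₁ hu₁).1⟩ ⟨hu₂.1, (hg u₂ hu₂).1⟩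

end MixedMoore

theorem Finset.card_filter_rel_eq_of_forall_le {α : Type*} [Fintype α] {R : α → α → Prop}
    [DecidableRel R] (hle : ∀ a, #{b | R a b} ≤ #{b | R b a}) (a : α) :
    #{b | R b a} = #{b | R a b} := by
  have hsum : ∑ a, #{b | R a b} = ∑ a, #{b | R b a} :=
    sum_card_bipartiteAbove_eq_sum_card_bipartiteBelow (s := univ) (t := univ) R
  exact ((sum_eq_sum_iff_of_le fun a _ => hle a).mp hsum a (mem_univ a)).symm

open MixedMoore in
theorem mixed_moore_totally_regular_general {V : Type*} [Fintype V]
    (E : V → V → Prop) [DecidableRel E] (r z : ℕ)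
    (hirr : ∀ v : V, ¬ E v v)
    (hund : ∀ v : V, (Finset.univ.filter fun w => E v w ∧ E w v).card = r)
    (hdir : ∀ v : V, (Finset.univ.filter fun w => E v w ∧ ¬ E w v).card = z)
    (hdiam : ∀ u v : V, u ≠ v → E u v ∨ ∃ w : V, E u w ∧ E w v)
    (hcard : Fintype.card V = (z + r) ^ 2 + z + 1) :
    ∀ v : V, (Finset.univ.filter fun u => E u v ∧ ¬ E v u).card = z := by
  have hout : ∀ w, #{x | E w x} = r + z := fun w => by
    rw [card_out_eq_card_edges_add_card_arcs, hund, hdir]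
  have hunique : ∀ v u : V, u ≠ v → shortWalkCount E v u = 1 := fun v u huv =>
    shortWalkCount_eq_one hirr hout hdiam (by rw [hcard, hund]; ring) huv
  intro v
  rw [card_filter_rel_eq_of_forall_le (R := fun u w => E u w ∧ ¬ E w u)
    (card_out_arcs_le_card_in_arcs hirr hdiam hunique), hdir]

/-- A mixed Moore graph of diameter 2 is totally regular: every vertex has
directed in-degree equal to `z`. -/
theorem mixed_moore_totally_regular {V : Type*} [Fintype V] [DecidableEq V]
    (E : V → V → Prop) [DecidableRel E] (r z : ℕ)
    (hirr : ∀ v : V, ¬ E v v)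
    (hund : ∀ v : V, (Finset.univ.filter fun w => E v w ∧ E w v).card = r)
    (hdir : ∀ v : V, (Finset.univ.filter fun w => E v w ∧ ¬ E w v).card = z)
    (hdiam : ∀ u v : V, u ≠ v → E u v ∨ ∃ w : V, E u w ∧ E w v)
    (hcard : Fintype.card V = (z + r) ^ 2 + z + 1) :
    ∀ v : V, (Finset.univ.filter fun u => E u v ∧ ¬ E v u).card = z :=
  mixed_moore_totally_regular_general E r z hirr hund hdir hdiam hcard
end

section
/- Let Γ be a mixed Moore graph of diameter 2 with undirected degree r and directed degree z, given by an irreflexive relation E on a finite vertex set V. Then every purely directed arc of Γ is contained in exactly one directed 3-cycle: for all vertices u, v with E u v and ¬E v u, there exists a unique vertex w such that E v w and E w u, and moreover for this w both arcs are purely directed, i.e. ¬E w v and ¬E u w. -/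
open Finset

/-- If every term of a sum over `s` is at least `1` and the sum equals `s.card`,
then every term equals `1`. -/
lemma sum_eq_card_forall_eq_one {α : Type*} [DecidableEq α] {s : Finset α} {f : α → ℕ}
    (h1 : ∀ i ∈ s, 1 ≤ f i) (h2 : ∑ i ∈ s, f i = s.card) : ∀ i ∈ s, f i = 1 := by
  intro i hi
  refine le_antisymm ?_ (h1 i hi)
  by_contra h
  push_neg at h
  have hge : 2 ≤ f i := h
  have hrest : (s.erase i).card ≤ ∑ j ∈ s.erase i, f j := by
    calc (s.erase i).card = ∑ j ∈ s.erase i, 1 := by simp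
    _ ≤ ∑ j ∈ s.erase i, f j :=
      Finset.sum_le_sum fun j hj => h1 j (Finset.mem_of_mem_erase hj)
  have hsplit : f i + ∑ j ∈ s.erase i, f j = ∑ j ∈ s, f j := Finset.add_sum_erase s f hi
  have hcard : (s.erase i).card = s.card - 1 := Finset.card_erase_of_mem hi
  have hpos : 1 ≤ s.card := Finset.card_pos.mpr ⟨i, hi⟩
  omega

/-- In a mixed Moore graph of diameter 2, every purely directed arc lies in a
unique directed 3-cycle, and both other arcs of that 3-cycle are purely directed. -/
theorem mixed_moore_arc_in_unique_triangle {V : Type*} [Fintype V] [DecidableEq V]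
    (E : V → V → Prop) [DecidableRel E] (r z : ℕ)
    (hirr : ∀ v : V, ¬ E v v)
    (hund : ∀ v : V, (Finset.univ.filter fun w => E v w ∧ E w v).card = r)
    (hdir : ∀ v : V, (Finset.univ.filter fun w => E v w ∧ ¬ E w v).card = z)
    (hdiam : ∀ u v : V, u ≠ v → E u v ∨ ∃ w : V, E u w ∧ E w v)
    (hcard : Fintype.card V = (z + r) ^ 2 + z + 1) :
    ∀ u v : V, E u v → ¬ E v u →
      (∃! w : V, E v w ∧ E w u) ∧
      (∀ w : V, E v w → E w u → ¬ E w v ∧ ¬ E u w) := by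
  -- N x y = number of 2-paths from x to y
  set N : V → V → ℕ := fun x y => (univ.filter fun m => E x m ∧ E m y).card with hN
  -- out-degree of every vertex is r + z
  have hdeg : ∀ x : V, (univ.filter fun w => E x w).card = r + z := by
    intro x
    rw [← hund x, ← hdir x,
      show (univ.filter fun w => E x w ∧ E w x)
          = (univ.filter fun w => E x w).filter (fun w => E w x) by rw [filter_filter],
      show (univ.filter fun w => E x w ∧ ¬ E w x)
          = (univ.filter fun w => E x w).filter (fun w => ¬ E w x) by rw [filter_filter]]
    exact (Finset.card_filter_add_card_filter_not (fun w => E w x)).symm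
  -- total number of 2-walks from x
  have hsum : ∀ x : V, ∑ y, N x y = (r + z) * (r + z) := by
    intro x
    have h1 : ∀ y, N x y = ∑ m ∈ univ.filter (fun m => E x m), if E m y then 1 else 0 := by
      intro y
      rw [hN]
      simp only
      rw [← Finset.filter_filter, Finset.card_filter]
    calc ∑ y, N x y
        = ∑ y : V, ∑ m ∈ univ.filter (fun m => E x m), if E m y then 1 else 0 := by
          exact Finset.sum_congr rfl fun y _ => h1 y
      _ = ∑ m ∈ univ.filter (fun m => E x m), ∑ y : V, if E m y then 1 else 0 :=
          Finset.sum_comm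
      _ = ∑ m ∈ univ.filter (fun m => E x m), (r + z) := by
          refine Finset.sum_congr rfl fun m _ => ?_
          rw [← Finset.card_filter]
          exact hdeg m
      _ = (r + z) * (r + z) := by rw [Finset.sum_const, hdeg x, smul_eq_mul]
  -- N x x = r
  have hNxx : ∀ x : V, N x x = r := fun x => hund x
  -- the key counting identity: exactly one route of length ≤ 2 between distinct vertices
  have key : ∀ x y : V, x ≠ y → (if E x y then 1 else 0) + N x y = 1 := by
    intro x
    have hge : ∀ y ∈ univ.erase x, 1 ≤ (if E x y then 1 else 0) + N x y := by
      intro y hy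
      have hxy : x ≠ y := (Finset.ne_of_mem_erase hy).symm
      rcases hdiam x y hxy with h | ⟨m, hm1, hm2⟩
      · simp [h]
      · have : 0 < N x y := Finset.card_pos.mpr ⟨m, by simp [hm1, hm2]⟩
        omega
    have hsum' : ∑ y ∈ univ.erase x, ((if E x y then 1 else 0) + N x y)
        = (univ.erase x).card := by
      have htot : ∑ y : V, ((if E x y then 1 else 0) + N x y)
          = (r + z) + (r + z) * (r + z) := by
        rw [Finset.sum_add_distrib, ← Finset.card_filter, hdeg x, hsum x]
      have hx : (if E x x then 1 else 0) + N x x = r := by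
        simp [hirr x, hNxx x]
      have hsplit := Finset.add_sum_erase univ
        (fun y => (if E x y then 1 else 0) + N x y) (Finset.mem_univ x)
      rw [hx, htot] at hsplit
      have hcard' : (univ.erase x).card = Fintype.card V - 1 := by
        rw [Finset.card_erase_of_mem (Finset.mem_univ x), Finset.card_univ]
      rw [hcard] at hcard'
      have hq : (z + r) ^ 2 = (r + z) * (r + z) := by ring
      omega
    have := sum_eq_card_forall_eq_one hge hsum'
    intro y hxy
    exact this y (Finset.mem_erase.mpr ⟨hxy.symm, Finset.mem_univ y⟩)
  have key1 : ∀ x y : V, x ≠ y → E x y → N x y = 0 := by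
    intro x y hxy h
    have := key x y hxy
    simp [h] at this
    omega
  have key2 : ∀ x y : V, x ≠ y → ¬ E x y → N x y = 1 := by
    intro x y hxy h
    have := key x y hxy
    simpa [h] using this
  -- now the theorem
  intro u v huv hvu
  have hne : u ≠ v := fun h => hirr v (h ▸ huv)
  constructor
  · -- unique directed 3-cycle
    have h1 : N v u = 1 := key2 v u hne.symm hvu
    obtain ⟨w, hw⟩ := Finset.card_eq_one.mp h1
    have hwmem : w ∈ univ.filter fun m => E v m ∧ E m u := hw ▸ Finset.mem_singleton_self w
    have hwprop : E v w ∧ E w u := (Finset.mem_filter.mp hwmem).2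
    refine ⟨w, hwprop, fun w' hw' => ?_⟩
    have : w' ∈ univ.filter fun m => E v m ∧ E m u := Finset.mem_filter.mpr ⟨Finset.mem_univ _, hw'⟩
    rw [hw] at this
    exact Finset.mem_singleton.mp this
  · intro w hvw hwu
    constructor
    · -- ¬ E w v, since w → u → v is a 2-path from w to v
      intro hwv
      have hwv' : w ≠ v := fun h => hirr v (h ▸ hvw)
      have h0 : N w v = 0 := key1 w v hwv' hwv
      have : 0 < N w v := Finset.card_pos.mpr ⟨u, by simp [hwu, huv]⟩
      omega
    · -- ¬ E u w, since u → v → w is a 2-path from u to w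
      intro huw
      have huw' : u ≠ w := fun h => hirr u (h ▸ hwu)
      have h0 : N u w = 0 := key1 u w huw' huw
      have : 0 < N u w := Finset.card_pos.mpr ⟨v, by simp [huv, hvw]⟩
      omega
end

section
/- Under the mixed Moore Cayley hypotheses, no element of S₁ has order 3 or 4: for every s ∈ S₁, orderOf s ≠ 3 and orderOf s ≠ 4. -/
open scoped Pointwise

/-- Under the mixed Moore Cayley hypotheses, no element of `S₁` has order 3 or 4. -/
theorem mixed_moore_cayley_S1_order {G : Type*} [Group G] [Fintype G] [DecidableEq G]
    (r z : ℕ) (hr : 0 < r) (hz : 0 < z)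
    (S₁ S₂ : Finset G)
    (hcard : Fintype.card G = (z + r) ^ 2 + z + 1)
    (hone : (1 : G) ∉ S₁ ∪ S₂)
    (hdisj : Disjoint S₁ S₂)
    (hS₁inv : S₁⁻¹ = S₁) (hS₁card : S₁.card = r)
    (hS₂inv : S₂ ∩ S₂⁻¹ = ∅) (hS₂card : S₂.card = z)
    (hdiam : ∀ g : G, g ≠ 1 →
      g ∈ S₁ ∪ S₂ ∨ ∃ s ∈ S₁ ∪ S₂, ∃ t ∈ S₁ ∪ S₂, g = s * t) :
    ∀ s ∈ S₁, orderOf s ≠ 3 ∧ orderOf s ≠ 4 := by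
  set T : Finset G := S₁ ∪ S₂ with hT
  have hTcard : T.card = r + z := by
    rw [hT, Finset.card_union_of_disjoint hdisj, hS₁card, hS₂card]
  -- the counting function: how many times `g` is covered
  set N : G → ℕ := fun g =>
    (if g ∈ T then 1 else 0) + ((T ×ˢ T).filter (fun p => p.1 * p.2 = g)).card with hN
  -- total count over all of `G`
  have hsumN : ∑ g : G, N g = (r + z) + (r + z) ^ 2 := by
    rw [hN, Finset.sum_add_distrib]
    congr 1
    · rw [Finset.sum_ite_mem, Finset.univ_inter, Finset.sum_const, smul_eq_mul,
        mul_one, hTcard]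
    · rw [← Finset.card_eq_sum_card_fiberwise (f := fun p : G × G => p.1 * p.2)
        (t := Finset.univ) (fun _ _ => Finset.mem_univ _),
        Finset.card_product, hTcard, sq]
  -- membership in `T` with inverse also in `T` forces membership in `S₁`
  have hinvT : ∀ a : G, a ∈ T → a⁻¹ ∈ T → a ∈ S₁ := by
    intro a ha hai
    rcases Finset.mem_union.mp ha with h1 | h2
    · exact h1
    rcases Finset.mem_union.mp hai with h1' | h2'
    · exfalso
      have haS : a ∈ S₁ := by rw [← hS₁inv, Finset.mem_inv']; exact h1'
      exact (Finset.disjoint_left.mp hdisj haS) h2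
    · exfalso
      have : a ∈ S₂ ∩ S₂⁻¹ := Finset.mem_inter.mpr ⟨h2, Finset.mem_inv'.mpr h2'⟩
      rw [hS₂inv] at this
      exact Finset.notMem_empty a this
  -- value at the identity
  have hN1 : N 1 = r := by
    have h1T : (1 : G) ∉ T := hone
    have hfilt : (T ×ˢ T).filter (fun p => p.1 * p.2 = 1)
        = S₁.image (fun a => (a, a⁻¹)) := by
      ext ⟨a, b⟩
      simp only [Finset.mem_filter, Finset.mem_product, Finset.mem_image, Prod.mk.injEq]
      constructor
      · rintro ⟨⟨ha, hb⟩, hab⟩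
        have hb' : b = a⁻¹ := eq_inv_of_mul_eq_one_right hab
        subst hb'
        exact ⟨a, hinvT a ha hb, rfl, rfl⟩
      · rintro ⟨c, hc, rfl, rfl⟩
        have hcT : c ∈ T := Finset.mem_union_left _ hc
        have hciT : c⁻¹ ∈ T := by
          refine Finset.mem_union_left _ ?_
          rw [← hS₁inv, Finset.mem_inv', inv_inv]; exact hc
        exact ⟨⟨hcT, hciT⟩, mul_inv_cancel c⟩
    have hinj : Function.Injective (fun a : G => (a, a⁻¹)) := by
      intro a b h
      exact congrArg Prod.fst h
    simp only [hN, if_neg h1T, zero_add, hfilt,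
      Finset.card_image_of_injective _ hinj, hS₁card]
  -- uniqueness of covering for non-identity elements
  have hkey : ∀ g : G, g ≠ 1 → N g ≤ 1 := by
    by_contra hcon
    push_neg at hcon
    obtain ⟨g₀, hg₀ne, hg₀⟩ := hcon
    have hmem : g₀ ∈ Finset.univ.erase (1 : G) :=
      Finset.mem_erase.mpr ⟨hg₀ne, Finset.mem_univ _⟩
    have hlow : ∀ g ∈ Finset.univ.erase (1 : G), 1 ≤ N g := by
      intro g hg
      have hgne : g ≠ 1 := (Finset.mem_erase.mp hg).1
      rcases hdiam g hgne with hgt | ⟨a, ha, b, hb, hab⟩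
      · simp only [hN, if_pos hgt]
        omega
      · have hmf : (a, b) ∈ (T ×ˢ T).filter (fun p => p.1 * p.2 = g) := by
          simp only [Finset.mem_filter, Finset.mem_product]
          exact ⟨⟨ha, hb⟩, hab.symm⟩
        have hpos : 1 ≤ ((T ×ˢ T).filter (fun p => p.1 * p.2 = g)).card :=
          Finset.card_pos.mpr ⟨_, hmf⟩
        simp only [hN]
        omega
    have hlt : ∑ _g ∈ Finset.univ.erase (1 : G), (1 : ℕ)
        < ∑ g ∈ Finset.univ.erase (1 : G), N g :=
      Finset.sum_lt_sum hlow ⟨g₀, hmem, hg₀⟩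
    have hsum1 : ∑ _g ∈ Finset.univ.erase (1 : G), (1 : ℕ) = (z + r) ^ 2 + z := by
      rw [Finset.sum_const, smul_eq_mul, mul_one,
        Finset.card_erase_of_mem (Finset.mem_univ _), Finset.card_univ, hcard,
        Nat.add_sub_cancel]
    have hsplit : ∑ g ∈ Finset.univ.erase (1 : G), N g + N 1 = ∑ g : G, N g :=
      Finset.sum_erase_add _ _ (Finset.mem_univ _)
    rw [hN1, hsumN] at hsplit
    rw [hsum1] at hlt
    have hpow : (z + r) ^ 2 = (r + z) ^ 2 := by ring
    rw [hpow] at hlt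
    generalize hK : (r + z) ^ 2 = K at hlt hsplit
    omega
  -- now the main argument
  intro s hs
  have hsT : s ∈ T := Finset.mem_union_left _ hs
  have hsi : s⁻¹ ∈ S₁ := by rw [← hS₁inv, Finset.mem_inv', inv_inv]; exact hs
  have hsiT : s⁻¹ ∈ T := Finset.mem_union_left _ hsi
  constructor
  · intro h3
    have hs3 : s ^ 3 = 1 := by rw [← h3]; exact pow_orderOf_eq_one s
    have hss : s * s = s⁻¹ := by
      have h1 : s * s * s = 1 := by
        rw [show s * s * s = s ^ 3 by rw [pow_succ, pow_two], hs3]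
      exact eq_inv_of_mul_eq_one_left h1
    have hne : s⁻¹ ≠ 1 := by
      intro h
      have hs1 : s = 1 := by rwa [inv_eq_one] at h
      rw [hs1, orderOf_one] at h3
      omega
    have hmemf : (s, s) ∈ (T ×ˢ T).filter (fun p => p.1 * p.2 = s⁻¹) := by
      simp only [Finset.mem_filter, Finset.mem_product]
      exact ⟨⟨hsT, hsT⟩, hss⟩
    have h1 : 1 ≤ ((T ×ˢ T).filter (fun p => p.1 * p.2 = s⁻¹)).card :=
      Finset.card_pos.mpr ⟨_, hmemf⟩
    have h2le : 2 ≤ N s⁻¹ := by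
      simp only [hN, if_pos hsiT]
      omega
    have := hkey s⁻¹ hne
    omega
  · intro h4
    have hs4 : s ^ 4 = 1 := by rw [← h4]; exact pow_orderOf_eq_one s
    have hsqne : s * s ≠ 1 := by
      intro h
      have hdvd : orderOf s ∣ 2 := orderOf_dvd_of_pow_eq_one (by rw [pow_two]; exact h)
      rw [h4] at hdvd
      omega
    have hssne : s ≠ s⁻¹ := by
      intro h
      apply hsqne
      calc s * s = s * s⁻¹ := by rw [← h]
        _ = 1 := mul_inv_cancel s
    have hii : s⁻¹ * s⁻¹ = s * s := by
      have h1 : (s * s) * (s * s) = 1 := by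
        rw [show (s * s) * (s * s) = s ^ 4 by
          rw [show (4 : ℕ) = 2 + 2 from rfl, pow_add, pow_two], hs4]
      have h2 : (s * s)⁻¹ = s * s := inv_eq_of_mul_eq_one_left h1
      rw [← h2, mul_inv_rev]
    have hm1 : (s, s) ∈ (T ×ˢ T).filter (fun p => p.1 * p.2 = s * s) :=
      Finset.mem_filter.mpr ⟨Finset.mem_product.mpr ⟨hsT, hsT⟩, rfl⟩
    have hm2 : (s⁻¹, s⁻¹) ∈ (T ×ˢ T).filter (fun p => p.1 * p.2 = s * s) := by
      simp only [Finset.mem_filter, Finset.mem_product]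
      exact ⟨⟨hsiT, hsiT⟩, hii⟩
    have h2card : 2 ≤ ((T ×ˢ T).filter (fun p => p.1 * p.2 = s * s)).card := by
      refine Finset.one_lt_card.mpr ⟨_, hm1, _, hm2, ?_⟩
      intro h
      exact hssne (congrArg Prod.fst h)
    have h2le : 2 ≤ N (s * s) := by
      simp only [hN]
      omega
    have := hkey (s * s) hsqne
    omega
end

section
/- Under the mixed Moore Cayley hypotheses, no pair of elements of S₁ has a product of order 2: for all s, t ∈ S₁, orderOf (s * t) ≠ 2. -/
open scoped Pointwise

/-- Under the mixed Moore Cayley hypotheses, no pair of elements of `S₁` has a product of order 2. -/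
theorem mixed_moore_cayley_S1_product_order {G : Type*} [Group G] [Fintype G] [DecidableEq G]
    (r z : ℕ) (hr : 0 < r) (hz : 0 < z)
    (S₁ S₂ : Finset G)
    (hcard : Fintype.card G = (z + r) ^ 2 + z + 1)
    (hone : (1 : G) ∉ S₁ ∪ S₂)
    (hdisj : Disjoint S₁ S₂)
    (hS₁inv : S₁⁻¹ = S₁) (hS₁card : S₁.card = r)
    (hS₂inv : S₂ ∩ S₂⁻¹ = ∅) (hS₂card : S₂.card = z)
    (hdiam : ∀ g : G, g ≠ 1 →
      g ∈ S₁ ∪ S₂ ∨ ∃ s ∈ S₁ ∪ S₂, ∃ t ∈ S₁ ∪ S₂, g = s * t) :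
    ∀ s ∈ S₁, ∀ t ∈ S₁, orderOf (s * t) ≠ 2 := by
  intro s hs t ht hord
  set S : Finset G := S₁ ∪ S₂ with hS
  have hinv1 : ∀ a : G, a ∈ S₁ → a⁻¹ ∈ S₁ := by
    intro a ha
    rw [← hS₁inv]
    exact Finset.inv_mem_inv ha
  have hScard : S.card = r + z := by
    rw [hS, Finset.card_union_of_disjoint hdisj, hS₁card, hS₂card]
  -- pairs with product 1
  have hT : ((S ×ˢ S).filter (fun p : G × G => p.1 * p.2 = 1))
      = S₁.image (fun a => (a, a⁻¹)) := by
    ext p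
    simp only [Finset.mem_filter, Finset.mem_product, Finset.mem_image]
    constructor
    · rintro ⟨⟨h1, h2⟩, hm⟩
      have hp2 : p.2 = p.1⁻¹ := eq_inv_of_mul_eq_one_right hm
      have hp1 : p.1 ∈ S₁ := by
        rcases Finset.mem_union.mp h1 with h | h
        · exact h
        · exfalso
          rcases Finset.mem_union.mp h2 with h' | h'
          · rw [hp2] at h'
            have : p.1 ∈ S₁ := by
              have := hinv1 _ h'
              simpa using this
            exact Finset.disjoint_left.mp hdisj this h
          · have : p.2 ∈ S₂ ∩ S₂⁻¹ := by
              refine Finset.mem_inter.mpr ⟨h', ?_⟩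
              rw [hp2]
              exact Finset.inv_mem_inv h
            rw [hS₂inv] at this
            exact absurd this (Finset.notMem_empty _)
      exact ⟨p.1, hp1, by rw [← hp2]⟩
    · rintro ⟨a, ha, rfl⟩
      exact ⟨⟨Finset.mem_union_left _ ha, Finset.mem_union_left _ (hinv1 _ ha)⟩,
        mul_inv_cancel a⟩
  have hTcard : ((S ×ˢ S).filter (fun p : G × G => p.1 * p.2 = 1)).card = r := by
    rw [hT, Finset.card_image_of_injective _ (fun a b hab => (Prod.mk.injEq _ _ _ _ ▸ hab).1),
      hS₁card]
  set P : Finset (G × G) := (S ×ˢ S).filter (fun p : G × G => ¬ p.1 * p.2 = 1) with hP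
  have hPcard : P.card = (z + r) ^ 2 - r := by
    have := Finset.card_filter_add_card_filter_not
      (s := S ×ˢ S) (p := fun p : G × G => p.1 * p.2 = 1)
    rw [← hP, hTcard, Finset.card_product, hScard,
      show (r + z) * (r + z) = (z + r) ^ 2 by ring] at this
    omega
  set I : Finset G := P.image (fun p : G × G => p.1 * p.2) with hI
  have hcover : Finset.univ \ insert 1 S ⊆ I := by
    intro g hg
    rw [Finset.mem_sdiff, Finset.mem_insert] at hg
    push_neg at hg
    obtain ⟨-, hg1, hgS⟩ := hg
    rcases hdiam g hg1 with h | ⟨a, ha, b, hb, rfl⟩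
    · exact absurd h hgS
    · exact Finset.mem_image.mpr ⟨(a, b),
        Finset.mem_filter.mpr ⟨Finset.mem_product.mpr ⟨ha, hb⟩, hg1⟩, rfl⟩
  have hIcard_ge : (z + r) ^ 2 - r ≤ I.card := by
    have h1 : (Finset.univ \ insert 1 S).card ≤ I.card := Finset.card_le_card hcover
    have h2 : (Finset.univ \ insert 1 S).card
        = Fintype.card G - (insert (1:G) S).card :=
      Finset.card_sdiff_of_subset (Finset.subset_univ _)
    have h3 : (insert (1:G) S).card = r + z + 1 := by
      rw [Finset.card_insert_of_notMem hone, hScard]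
    have h4 : r ≤ (z + r) ^ 2 := by nlinarith
    rw [h2, h3, hcard] at h1
    omega
  have hIcard_le : I.card ≤ P.card := Finset.card_image_le
  have hinj : Set.InjOn (fun p : G × G => p.1 * p.2) P := by
    apply Finset.card_image_iff.mp
    rw [← hI]
    omega
  -- now the pairs (s, t) and (t⁻¹, s⁻¹)
  have hst1 : s * t ≠ 1 := by
    intro h
    rw [h, orderOf_one] at hord
    exact absurd hord (by norm_num)
  have hsq : (s * t) * (s * t) = 1 := by
    have := pow_orderOf_eq_one (s * t)
    rw [hord, sq] at this
    exact this
  have hinvst : t⁻¹ * s⁻¹ = s * t := by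
    rw [← mul_inv_rev]
    exact inv_eq_of_mul_eq_one_right hsq
  have hmem1 : ((s, t) : G × G) ∈ P :=
    Finset.mem_filter.mpr ⟨Finset.mem_product.mpr
      ⟨Finset.mem_union_left _ hs, Finset.mem_union_left _ ht⟩, hst1⟩
  have hmem2 : ((t⁻¹, s⁻¹) : G × G) ∈ P :=
    Finset.mem_filter.mpr ⟨Finset.mem_product.mpr
      ⟨Finset.mem_union_left _ (hinv1 _ ht), Finset.mem_union_left _ (hinv1 _ hs)⟩,
      by rw [hinvst]; exact hst1⟩
  have heq := hinj hmem1 hmem2 (by simp [hinvst])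
  have hst : s = t⁻¹ := congrArg Prod.fst heq
  apply hst1
  rw [hst, inv_mul_cancel]
end

section
/- Under the mixed Moore Cayley hypotheses, no two distinct elements of S commute apart from the inverse pairs in S₁: for all s, t ∈ S with s ≠ t, if s * t = t * s then s ∈ S₁ and t = s⁻¹. -/
/-!
Count the vertices reached from `1` by walks of length at most two in the Cayley graph: `1`, the
`|S| = r + z` elements of `S`, and at most `|S|² - |S ∩ S⁻¹| = (r + z)² - r` elements `s * t ≠ 1`.
Since `|G| = (z + r)² + z + 1` and every element is reached, the product map is injective on pairs
with `s * t ≠ 1`. Commuting `s ≠ t` give two such pairs `(s, t)`, `(t, s)` with one product, so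
`s * t = 1`, and `s ∈ S ∩ S⁻¹ = S₁`.
-/

open scoped Pointwise
open Finset

section

variable {G : Type*} [Group G] [DecidableEq G]

def nontrivialPairs (S : Finset G) : Finset (G × G) :=
  (S ×ˢ S).filter fun p => p.1 * p.2 ≠ 1

theorem card_filter_mul_eq_one (S : Finset G) :
    #((S ×ˢ S).filter fun p => p.1 * p.2 = 1) = #(S ∩ S⁻¹) := by
  refine card_nbij' Prod.fst (fun a => (a, a⁻¹)) ?_ ?_ ?_ fun _ _ => rfl
  · rintro ⟨a, b⟩ hab
    simp only [coe_filter, mem_product, Set.mem_ofPred_eq] at hab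
    obtain ⟨⟨ha, hb⟩, hab⟩ := hab
    rw [eq_inv_of_mul_eq_one_right hab] at hb
    simpa [mem_inv'] using And.intro ha hb
  · intro a ha
    simp_all
  · rintro ⟨a, b⟩ hab
    simp only [coe_filter, mem_product, Set.mem_ofPred_eq] at hab
    simp [eq_inv_of_mul_eq_one_right hab.2]

theorem card_nontrivialPairs_add_card_inter_inv (S : Finset G) :
    #(nontrivialPairs S) + #(S ∩ S⁻¹) = #S * #S := by
  rw [nontrivialPairs, ← card_filter_mul_eq_one, add_comm, card_filter_add_card_filter_not,
    card_product]

theorem card_le_one_add_card_add_card_image_mul [Fintype G] {S : Finset G}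
    (hdiam : ∀ g : G, g ≠ 1 → g ∈ S ∨ ∃ s ∈ S, ∃ t ∈ S, g = s * t) :
    Fintype.card G ≤ 1 + #S + #((nontrivialPairs S).image fun p => p.1 * p.2) := by
  have hcover :
      (univ : Finset G) ⊆ insert 1 (S ∪ (nontrivialPairs S).image fun p => p.1 * p.2) := by
    intro g _
    by_cases hg : g = 1
    · simp [hg]
    · rcases hdiam g hg with hgS | ⟨s, hs, t, ht, rfl⟩
      · simp [hgS]
      · refine mem_insert_of_mem (mem_union_right _ (mem_image.2 ⟨(s, t), ?_, rfl⟩))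
        simp [nontrivialPairs, hs, ht, hg]
  calc Fintype.card G = #(univ : Finset G) := card_univ.symm
    _ ≤ #(insert 1 (S ∪ (nontrivialPairs S).image fun p => p.1 * p.2)) := card_le_card hcover
    _ ≤ #(S ∪ (nontrivialPairs S).image fun p => p.1 * p.2) + 1 := card_insert_le _ _
    _ ≤ 1 + #S + #((nontrivialPairs S).image fun p => p.1 * p.2) := by
      have := card_union_le S ((nontrivialPairs S).image fun p => p.1 * p.2)
      omega

theorem injOn_mul_nontrivialPairs [Fintype G] {S : Finset G}
    (hdiam : ∀ g : G, g ≠ 1 → g ∈ S ∨ ∃ s ∈ S, ∃ t ∈ S, g = s * t)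
    (hcard : #S * #S + #S + 1 ≤ Fintype.card G + #(S ∩ S⁻¹)) :
    Set.InjOn (fun p : G × G => p.1 * p.2) (nontrivialPairs S) := by
  rw [← card_image_iff]
  have hle := card_le_one_add_card_add_card_image_mul hdiam
  have hsplit := card_nontrivialPairs_add_card_inter_inv S
  have himage : #((nontrivialPairs S).image fun p => p.1 * p.2) ≤ #(nontrivialPairs S) :=
    card_image_le
  omega

theorem mul_eq_one_of_commute {S : Finset G}
    (hinj : Set.InjOn (fun p : G × G => p.1 * p.2) (nontrivialPairs S))
    {s t : G} (hs : s ∈ S) (ht : t ∈ S) (hst : s ≠ t) (hcomm : s * t = t * s) :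
    s * t = 1 := by
  by_contra hne
  have hpair : (s, t) = (t, s) :=
    hinj (by simp [nontrivialPairs, hs, ht, hne]) (by simp [nontrivialPairs, hs, ht, ← hcomm, hne])
      hcomm
  exact hst (Prod.mk.inj hpair).1

theorem union_inter_inv_eq_left {S₁ S₂ : Finset G} (hS₁inv : S₁⁻¹ = S₁)
    (hS₂inv : S₂ ∩ S₂⁻¹ = ∅) : (S₁ ∪ S₂) ∩ (S₁ ∪ S₂)⁻¹ = S₁ := by
  rw [inv_def, image_union, ← inv_def, ← inv_def, hS₁inv, ← union_inter_distrib_left, hS₂inv,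
    union_empty]

end

theorem mixed_moore_cayley_no_commuting_general {G : Type*} [Group G] [Fintype G] [DecidableEq G]
    (r z : ℕ)
    (S₁ S₂ : Finset G)
    (hcard : Fintype.card G = (z + r) ^ 2 + z + 1)
    (hdisj : Disjoint S₁ S₂)
    (hS₁inv : S₁⁻¹ = S₁) (hS₁card : S₁.card = r)
    (hS₂inv : S₂ ∩ S₂⁻¹ = ∅) (hS₂card : S₂.card = z)
    (hdiam : ∀ g : G, g ≠ 1 →
      g ∈ S₁ ∪ S₂ ∨ ∃ s ∈ S₁ ∪ S₂, ∃ t ∈ S₁ ∪ S₂, g = s * t) :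
    ∀ s ∈ S₁ ∪ S₂, ∀ t ∈ S₁ ∪ S₂, s ≠ t → s * t = t * s → s ∈ S₁ ∧ t = s⁻¹ := by
  intro s hs t ht hst hcomm
  have hS_inter_inv := union_inter_inv_eq_left hS₁inv hS₂inv
  have hS : #(S₁ ∪ S₂) = r + z := by rw [card_union_of_disjoint hdisj, hS₁card, hS₂card]
  have hinj := injOn_mul_nontrivialPairs hdiam <| by
    rw [hS_inter_inv, hS, hcard, hS₁card]; exact le_of_eq (by ring)
  have ht_inv : t = s⁻¹ := eq_inv_of_mul_eq_one_right (mul_eq_one_of_commute hinj hs ht hst hcomm)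
  refine ⟨?_, ht_inv⟩
  rw [← hS_inter_inv]
  exact mem_inter.2 ⟨hs, by rwa [mem_inv', ← ht_inv]⟩

/-- Under the mixed Moore Cayley hypotheses, no two distinct elements of `S = S₁ ∪ S₂` commute, apart from the inverse pairs in `S₁`. -/
theorem mixed_moore_cayley_no_commuting {G : Type*} [Group G] [Fintype G] [DecidableEq G]
    (r z : ℕ) (hr : 0 < r) (hz : 0 < z)
    (S₁ S₂ : Finset G)
    (hcard : Fintype.card G = (z + r) ^ 2 + z + 1)
    (hone : (1 : G) ∉ S₁ ∪ S₂)
    (hdisj : Disjoint S₁ S₂)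
    (hS₁inv : S₁⁻¹ = S₁) (hS₁card : S₁.card = r)
    (hS₂inv : S₂ ∩ S₂⁻¹ = ∅) (hS₂card : S₂.card = z)
    (hdiam : ∀ g : G, g ≠ 1 →
      g ∈ S₁ ∪ S₂ ∨ ∃ s ∈ S₁ ∪ S₂, ∃ t ∈ S₁ ∪ S₂, g = s * t) :
    ∀ s ∈ S₁ ∪ S₂, ∀ t ∈ S₁ ∪ S₂, s ≠ t → s * t = t * s → s ∈ S₁ ∧ t = s⁻¹ :=
  mixed_moore_cayley_no_commuting_general r z S₁ S₂ hcard hdisj hS₁inv hS₁card hS₂inv hS₂card hdiam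
end

section
/- Under the mixed Moore Cayley hypotheses, the set S is product-free: for all s, t, u ∈ S, s * t ≠ u (equivalently, S ∩ SS = ∅). -/
open scoped Pointwise

/-- Under the mixed Moore Cayley hypotheses, the set `S = S₁ ∪ S₂` is product-free. -/
theorem mixed_moore_cayley_product_free {G : Type*} [Group G] [Fintype G] [DecidableEq G]
    (r z : ℕ) (hr : 0 < r) (hz : 0 < z)
    (S₁ S₂ : Finset G)
    (hcard : Fintype.card G = (z + r) ^ 2 + z + 1)
    (hone : (1 : G) ∉ S₁ ∪ S₂)
    (hdisj : Disjoint S₁ S₂)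
    (hS₁inv : S₁⁻¹ = S₁) (hS₁card : S₁.card = r)
    (hS₂inv : S₂ ∩ S₂⁻¹ = ∅) (hS₂card : S₂.card = z)
    (hdiam : ∀ g : G, g ≠ 1 →
      g ∈ S₁ ∪ S₂ ∨ ∃ s ∈ S₁ ∪ S₂, ∃ t ∈ S₁ ∪ S₂, g = s * t) :
    ∀ s ∈ S₁ ∪ S₂, ∀ t ∈ S₁ ∪ S₂, ∀ u ∈ S₁ ∪ S₂, s * t ≠ u := by
  intro s hs t ht u hu heq
  set S : Finset G := S₁ ∪ S₂ with hSdef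
  have hScard : S.card = r + z := by
    rw [hSdef, Finset.card_union_of_disjoint hdisj, hS₁card, hS₂card]
  have hinv1 : ∀ x : G, x ∈ S₁ ↔ x⁻¹ ∈ S₁ := by
    intro x
    constructor
    · intro hx
      rw [← hS₁inv]
      exact Finset.inv_mem_inv hx
    · intro hx
      have := Finset.inv_mem_inv hx
      rwa [inv_inv, hS₁inv] at this
  -- key: pairs with product 1
  have hkey : ∀ a ∈ S, ∀ b ∈ S, a * b = 1 → a ∈ S₁ ∧ b = a⁻¹ := by
    intro a ha b hb hab
    have hb' : b = a⁻¹ := eq_inv_of_mul_eq_one_right hab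
    subst hb'
    refine ⟨?_, rfl⟩
    rcases Finset.mem_union.mp ha with h1 | h2
    · exact h1
    · exfalso
      rcases Finset.mem_union.mp hb with h1' | h2'
      · have : a ∈ S₁ := (hinv1 a).mpr h1'
        exact Finset.disjoint_left.mp hdisj this h2
      · have : a ∈ S₂⁻¹ := by
          have := Finset.inv_mem_inv h2'
          rwa [inv_inv] at this
        have : a ∈ S₂ ∩ S₂⁻¹ := Finset.mem_inter.mpr ⟨h2, this⟩
        rw [hS₂inv] at this
        exact absurd this (Finset.notMem_empty a)
  set P : Finset (G × G) := (S ×ˢ S).filter (fun p => p.1 * p.2 = 1) with hPdef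
  have hPcard : P.card = r := by
    rw [← hS₁card]
    apply Finset.card_bij (fun p _ => p.1)
    · intro p hp
      rw [hPdef, Finset.mem_filter, Finset.mem_product] at hp
      exact (hkey p.1 hp.1.1 p.2 hp.1.2 hp.2).1
    · intro p hp q hq hpq
      rw [hPdef, Finset.mem_filter, Finset.mem_product] at hp hq
      have h1 := (hkey p.1 hp.1.1 p.2 hp.1.2 hp.2).2
      have h2 := (hkey q.1 hq.1.1 q.2 hq.1.2 hq.2).2
      exact Prod.ext hpq (by rw [h1, h2, hpq])
    · intro a ha
      refine ⟨(a, a⁻¹), ?_, rfl⟩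
      rw [hPdef, Finset.mem_filter, Finset.mem_product]
      have ha' : a⁻¹ ∈ S₁ := (hinv1 a).mp ha
      exact ⟨⟨Finset.mem_union_left _ ha, Finset.mem_union_left _ ha'⟩, mul_inv_cancel a⟩
  set Q : Finset (G × G) := (S ×ˢ S).filter (fun p => ¬ p.1 * p.2 = 1) with hQdef
  have hPQ : P.card + Q.card = (r + z) ^ 2 := by
    rw [hPdef, hQdef, Finset.card_filter_add_card_filter_not,
      Finset.card_product, hScard, sq]
  set T : Finset G := Q.image (fun p => p.1 * p.2) with hTdef
  have hTcard : T.card ≤ Q.card := Finset.card_image_le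
  -- cover
  have hcover : (Finset.univ : Finset G) ⊆ insert 1 (S ∪ T) := by
    intro g _
    by_cases hg : g = 1
    · exact Finset.mem_insert.mpr (Or.inl hg)
    · refine Finset.mem_insert.mpr (Or.inr ?_)
      rcases hdiam g hg with h | ⟨a, ha, b, hb, hab⟩
      · exact Finset.mem_union_left _ h
      · refine Finset.mem_union_right _ ?_
        rw [hTdef]
        refine Finset.mem_image.mpr ⟨(a, b), ?_, hab.symm⟩
        rw [hQdef, Finset.mem_filter, Finset.mem_product]
        exact ⟨⟨ha, hb⟩, by rw [← hab]; exact hg⟩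
  -- u is in both S and T
  have hu1 : u ≠ 1 := fun h => hone (h ▸ hu)
  have huT : u ∈ T := by
    rw [hTdef]
    refine Finset.mem_image.mpr ⟨(s, t), ?_, heq⟩
    rw [hQdef, Finset.mem_filter, Finset.mem_product]
    exact ⟨⟨hs, ht⟩, by rw [heq]; exact hu1⟩
  have hinter : 1 ≤ (S ∩ T).card := by
    rw [Nat.succ_le_iff, Finset.card_pos]
    exact ⟨u, Finset.mem_inter.mpr ⟨hu, huT⟩⟩
  have hunion : (S ∪ T).card + (S ∩ T).card = S.card + T.card :=
    Finset.card_union_add_card_inter S T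
  have hle : Fintype.card G ≤ (insert 1 (S ∪ T)).card := by
    rw [← Finset.card_univ]
    exact Finset.card_le_card hcover
  have hins : (insert 1 (S ∪ T)).card ≤ 1 + (S ∪ T).card := by
    rw [add_comm]
    exact Finset.card_insert_le _ _
  have hzr : (z + r) ^ 2 = (r + z) ^ 2 := by ring
  rw [hcard, hzr] at hle
  generalize hm : (r + z) ^ 2 = m at hle hPQ
  omega
end

section
/- Under the mixed Moore Cayley hypotheses, all non-identity products of two elements of S are unique: for all s, t, s', t' ∈ S, if s * t ≠ 1 and s * t = s' * t', then s = s' and t = t'. -/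
open scoped Pointwise

/-- Under the mixed Moore Cayley hypotheses, all non-identity products of two elements of `S = S₁ ∪ S₂` are unique. -/
theorem mixed_moore_cayley_unique_products {G : Type*} [Group G] [Fintype G] [DecidableEq G]
    (r z : ℕ) (hr : 0 < r) (hz : 0 < z)
    (S₁ S₂ : Finset G)
    (hcard : Fintype.card G = (z + r) ^ 2 + z + 1)
    (hone : (1 : G) ∉ S₁ ∪ S₂)
    (hdisj : Disjoint S₁ S₂)
    (hS₁inv : S₁⁻¹ = S₁) (hS₁card : S₁.card = r)
    (hS₂inv : S₂ ∩ S₂⁻¹ = ∅) (hS₂card : S₂.card = z)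
    (hdiam : ∀ g : G, g ≠ 1 →
      g ∈ S₁ ∪ S₂ ∨ ∃ s ∈ S₁ ∪ S₂, ∃ t ∈ S₁ ∪ S₂, g = s * t) :
    ∀ s ∈ S₁ ∪ S₂, ∀ t ∈ S₁ ∪ S₂, ∀ s' ∈ S₁ ∪ S₂, ∀ t' ∈ S₁ ∪ S₂,
      s * t ≠ 1 → s * t = s' * t' → s = s' ∧ t = t' := by
  intro s hs t ht s' hs' t' ht' hne heq
  by_contra hcon
  set T := S₁ ∪ S₂ with hT
  set Q := (T ×ˢ T).filter (fun p => ¬ p.1 * p.2 = 1) with hQdef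
  set P := Q.image (fun p => p.1 * p.2) with hPdef
  have hTcard : T.card = r + z := by
    rw [hT, Finset.card_union_of_disjoint hdisj, hS₁card, hS₂card]
  -- the "bad" pairs with product 1 are exactly (a, a⁻¹) for a ∈ S₁
  have hBad : (T ×ˢ T).filter (fun p => p.1 * p.2 = 1)
      = S₁.image (fun a => (a, a⁻¹)) := by
    ext p
    simp only [Finset.mem_filter, Finset.mem_product, Finset.mem_image]
    constructor
    · rintro ⟨⟨h1, h2⟩, hp⟩
      have hp2 : p.2 = p.1⁻¹ := eq_inv_of_mul_eq_one_right hp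
      have h1' : p.1 ∈ S₁ := by
        rcases Finset.mem_union.mp h1 with h | h
        · exact h
        · -- p.1 ∈ S₂, derive contradiction
          exfalso
          rw [hp2] at h2
          rcases Finset.mem_union.mp h2 with hh | hh
          · have : p.1 ∈ S₁⁻¹ := Finset.mem_inv'.mpr hh
            rw [hS₁inv] at this
            exact (Finset.disjoint_left.mp hdisj this) h
          · have : p.1 ∈ S₂ ∩ S₂⁻¹ :=
              Finset.mem_inter.mpr ⟨h, Finset.mem_inv'.mpr hh⟩
            rw [hS₂inv] at this
            exact absurd this (Finset.notMem_empty _)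
      exact ⟨p.1, h1', Prod.ext rfl hp2.symm⟩
    · rintro ⟨a, ha, rfl⟩
      have hainv : a⁻¹ ∈ S₁ := by
        rw [← hS₁inv]
        exact Finset.mem_inv'.mpr (by simpa using ha)
      exact ⟨⟨Finset.mem_union_left _ ha, Finset.mem_union_left _ hainv⟩,
        mul_inv_cancel a⟩
  have hBadcard : ((T ×ˢ T).filter (fun p => p.1 * p.2 = 1)).card = r := by
    rw [hBad, Finset.card_image_of_injective _ (fun a b hab => (Prod.mk.injEq _ _ _ _ ▸ hab).1),
      hS₁card]
  have hQsum : Q.card + r = (z + r) ^ 2 := by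
    have := Finset.card_filter_add_card_filter_not
      (s := T ×ˢ T) (p := fun p => p.1 * p.2 = 1)
    rw [hBadcard] at this
    have hQ' : (Finset.filter (fun a => ¬a.1 * a.2 = 1) (T ×ˢ T)).card = Q.card := rfl
    have hcardTT : (T ×ˢ T).card = (z + r) ^ 2 := by
      rw [Finset.card_product, hTcard, sq]
      ring
    omega
  -- the two distinct pairs in Q with the same product
  have hmem1 : (s, t) ∈ Q := by
    rw [hQdef]
    exact Finset.mem_filter.mpr ⟨Finset.mem_product.mpr ⟨hs, ht⟩, hne⟩
  have hmem2 : (s', t') ∈ Q := by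
    rw [hQdef]
    exact Finset.mem_filter.mpr ⟨Finset.mem_product.mpr ⟨hs', ht'⟩, heq ▸ hne⟩
  have hne' : (s, t) ≠ (s', t') := by
    intro h
    exact hcon ⟨congrArg Prod.fst h, congrArg Prod.snd h⟩
  -- image with one pair erased is still all of P
  have hPsub : P ⊆ (Q.erase (s', t')).image (fun p => p.1 * p.2) := by
    intro g hg
    rcases Finset.mem_image.mp hg with ⟨p, hp, hpg⟩
    by_cases hps : p = (s', t')
    · refine Finset.mem_image.mpr ⟨(s, t), Finset.mem_erase.mpr ⟨hne', hmem1⟩, ?_⟩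
      simp only
      rw [heq, ← hpg, hps]
    · exact Finset.mem_image.mpr ⟨p, Finset.mem_erase.mpr ⟨hps, hp⟩, hpg⟩
  have hPcard : P.card + 1 ≤ Q.card := by
    have h1 : P.card ≤ (Q.erase (s', t')).card :=
      le_trans (Finset.card_le_card hPsub) (Finset.card_image_le)
    have h2 : (Q.erase (s', t')).card = Q.card - 1 :=
      Finset.card_erase_of_mem hmem2
    have h3 : 1 ≤ Q.card := Finset.card_pos.mpr ⟨_, hmem2⟩
    omega
  -- coverage
  have hcover : (Finset.univ : Finset G) ⊆ insert (1 : G) (T ∪ P) := by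
    intro g _
    by_cases hg1 : g = 1
    · exact hg1 ▸ Finset.mem_insert_self _ _
    · refine Finset.mem_insert_of_mem ?_
      rcases hdiam g hg1 with h | ⟨a, ha, b, hb, hab⟩
      · exact Finset.mem_union_left _ h
      · refine Finset.mem_union_right _ ?_
        refine Finset.mem_image.mpr ⟨(a, b), ?_, hab.symm⟩
        rw [hQdef]
        exact Finset.mem_filter.mpr ⟨Finset.mem_product.mpr ⟨ha, hb⟩,
          by rw [← hab]; exact hg1⟩
  have hbound : Fintype.card G ≤ 1 + (T.card + P.card) := by
    calc Fintype.card G = (Finset.univ : Finset G).card := rfl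
      _ ≤ (insert (1 : G) (T ∪ P)).card := Finset.card_le_card hcover
      _ ≤ (T ∪ P).card + 1 := Finset.card_insert_le _ _
      _ ≤ 1 + (T.card + P.card) := by
          have := Finset.card_union_le T P
          omega
  generalize hm : (z + r) ^ 2 = m at hcard hQsum
  omega
end

section
/- Under the mixed Moore Cayley hypotheses, every element of S₂ is of one of two types: for every a ∈ S₂, either a has order 3, or there exist b, c ∈ S₂ such that a, b, c are pairwise distinct, each of a, b, c has order at least 4, and a * b * c = 1 (i.e. (a*b)⁻¹ = c). -/
open scoped Pointwise

/-- An element that is not 1, whose square is not 1, and whose cube is not 1,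
has order at least 4. -/
private lemma mmc_order_ge_four {G : Type*} [Group G] [Fintype G] (x : G)
    (h1 : x ≠ 1) (h2 : x * x ≠ 1) (h3 : x * x * x ≠ 1) : 4 ≤ orderOf x := by
  by_contra h
  push_neg at h
  have hpos : 0 < orderOf x := orderOf_pos x
  have hpow := pow_orderOf_eq_one x
  have hcase : orderOf x = 1 ∨ orderOf x = 2 ∨ orderOf x = 3 := by omega
  rcases hcase with hc | hc | hc
  · exact h1 (orderOf_eq_one_iff.mp hc)
  · rw [hc, pow_two] at hpow; exact h2 hpow
  · rw [hc, pow_succ, pow_succ, pow_one] at hpow; exact h3 hpow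

/-- Under the mixed Moore Cayley hypotheses, every element of `S₂` either has order 3, or belongs to a triple of distinct elements of `S₂`, each of order at least 4, whose product is the identity. -/
theorem mixed_moore_cayley_S2_types {G : Type*} [Group G] [Fintype G] [DecidableEq G]
    (r z : ℕ) (hr : 0 < r) (hz : 0 < z)
    (S₁ S₂ : Finset G)
    (hcard : Fintype.card G = (z + r) ^ 2 + z + 1)
    (hone : (1 : G) ∉ S₁ ∪ S₂)
    (hdisj : Disjoint S₁ S₂)
    (hS₁inv : S₁⁻¹ = S₁) (hS₁card : S₁.card = r)
    (hS₂inv : S₂ ∩ S₂⁻¹ = ∅) (hS₂card : S₂.card = z)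
    (hdiam : ∀ g : G, g ≠ 1 →
      g ∈ S₁ ∪ S₂ ∨ ∃ s ∈ S₁ ∪ S₂, ∃ t ∈ S₁ ∪ S₂, g = s * t) :
    ∀ a ∈ S₂, orderOf a = 3 ∨
      ∃ b ∈ S₂, ∃ c ∈ S₂, a ≠ b ∧ a ≠ c ∧ b ≠ c ∧
        4 ≤ orderOf a ∧ 4 ≤ orderOf b ∧ 4 ≤ orderOf c ∧ a * b * c = 1 := by
  classical
  set S : Finset G := S₁ ∪ S₂ with hSdef
  -- basic facts about inverses
  have hS₁inv' : ∀ x ∈ S₁, x⁻¹ ∈ S₁ := by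
    intro x hx
    rw [← hS₁inv]
    exact Finset.inv_mem_inv hx
  have hinvS₂ : ∀ x ∈ S₂, x⁻¹ ∉ S := by
    intro x hx hmem
    rcases Finset.mem_union.mp hmem with h | h
    · have hx1 : x ∈ S₁ := by
        have := hS₁inv' _ h
        simpa using this
      exact Finset.disjoint_left.mp hdisj hx1 hx
    · have : x⁻¹ ∈ S₂ ∩ S₂⁻¹ :=
        Finset.mem_inter.mpr ⟨h, Finset.inv_mem_inv hx⟩
      rw [hS₂inv] at this
      simp at this
  have hScard : S.card = r + z := by
    rw [hSdef, Finset.card_union_of_disjoint hdisj, hS₁card, hS₂card]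
  -- the counting argument
  set f : G × G → G := fun p => p.1 * p.2 with hfdef
  set T : Finset (G × G) := (S ×ˢ S).filter (fun p => p.1 * p.2 ≠ 1) with hTdef
  set I : Finset G := T.image f with hIdef
  have hsplit : r + T.card = (r + z) ^ 2 := by
    have hB : ((S ×ˢ S).filter (fun p => p.1 * p.2 = 1)) =
        S₁.image (fun s => (s, s⁻¹)) := by
      ext p
      simp only [Finset.mem_filter, Finset.mem_product, Finset.mem_image]
      constructor
      · rintro ⟨⟨h1, h2⟩, h3⟩
        have hp2 : p.2 = p.1⁻¹ := by
          have := mul_eq_one_iff_eq_inv.mp h3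
          rw [this]; simp
        have hp1 : p.1 ∈ S₁ := by
          rcases Finset.mem_union.mp h1 with h | h
          · exact h
          · exact absurd (hp2 ▸ h2) (hinvS₂ _ h)
        refine ⟨p.1, hp1, ?_⟩
        simp [Prod.ext_iff, hp2]
      · rintro ⟨s, hs, rfl⟩
        exact ⟨⟨Finset.mem_union_left _ hs, Finset.mem_union_left _ (hS₁inv' _ hs)⟩, by simp⟩
    have hBcard : ((S ×ˢ S).filter (fun p => p.1 * p.2 = 1)).card = r := by
      rw [hB, Finset.card_image_of_injective _ (fun a b h => by simpa using congrArg Prod.fst h),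
        hS₁card]
    have := Finset.card_filter_add_card_filter_not
      (s := S ×ˢ S) (p := fun p : G × G => p.1 * p.2 = 1)
    rw [hBcard] at this
    rw [← hTdef] at this
    rw [this, Finset.card_product, hScard, sq]
  -- surjectivity
  have hcover : (Finset.univ : Finset G) ⊆ insert 1 (S ∪ I) := by
    intro g _
    by_cases hg : g = 1
    · simp [hg]
    rcases hdiam g hg with h | ⟨s, hs, t, ht, rfl⟩
    · exact Finset.mem_insert_of_mem (Finset.mem_union_left _ h)
    · refine Finset.mem_insert_of_mem (Finset.mem_union_right _ ?_)
      exact Finset.mem_image.mpr ⟨(s, t), by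
        simp only [hTdef, Finset.mem_filter, Finset.mem_product]
        exact ⟨⟨hs, ht⟩, hg⟩, rfl⟩
  have hunivle : Fintype.card G ≤ (S ∪ I).card + 1 := by
    have h := Finset.card_le_card hcover
    rw [Finset.card_univ] at h
    exact h.trans (Finset.card_insert_le _ _)
  have hkey : I.card = T.card ∧ (S ∩ I).card = 0 := by
    have h2 := Finset.card_union_add_card_inter S I
    have h3 : I.card ≤ T.card := Finset.card_image_le
    have hcard' : Fintype.card G = (r + z) ^ 2 + z + 1 := by
      rw [hcard, add_comm z r]
    generalize hm : (r + z) ^ 2 = m at hsplit hcard'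
    omega
  have hdisjSI : Disjoint S I :=
    Finset.disjoint_iff_inter_eq_empty.mpr (Finset.card_eq_zero.mp hkey.2)
  have hinj : Set.InjOn f ↑T := Finset.card_image_iff.mp hkey.1
  -- uniqueness of representations
  have hU : ∀ x y x' y' : G, x ∈ S → y ∈ S → x' ∈ S → y' ∈ S →
      x * y = x' * y' → x * y ≠ 1 → x = x' ∧ y = y' := by
    intro x y x' y' hx hy hx' hy' heq hne
    have h1 : (x, y) ∈ T := by
      simp only [hTdef, Finset.mem_filter, Finset.mem_product]
      exact ⟨⟨hx, hy⟩, hne⟩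
    have h2 : (x', y') ∈ T := by
      simp only [hTdef, Finset.mem_filter, Finset.mem_product]
      exact ⟨⟨hx', hy'⟩, heq ▸ hne⟩
    have := hinj (Finset.mem_coe.mpr h1) (Finset.mem_coe.mpr h2) heq
    exact ⟨congrArg Prod.fst this, congrArg Prod.snd this⟩
  -- products of two elements of S are never in S
  have hD : ∀ x ∈ S, ∀ y ∈ S, x * y ∉ S := by
    intro x hx y hy hmem
    by_cases hne : x * y = 1
    · rw [hne] at hmem
      exact hone hmem
    · have hI : x * y ∈ I := Finset.mem_image.mpr ⟨(x, y), by
        simp only [hTdef, Finset.mem_filter, Finset.mem_product]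
        exact ⟨⟨hx, hy⟩, hne⟩, rfl⟩
      exact Finset.disjoint_left.mp hdisjSI hmem hI
  -- main argument
  intro a ha
  have haS : a ∈ S := Finset.mem_union_right _ ha
  have hane : a ≠ 1 := fun h => hone (h ▸ haS)
  have hainv : a⁻¹ ∉ S := hinvS₂ a ha
  have hainvne : a⁻¹ ≠ 1 := by simpa using hane
  rcases hdiam a⁻¹ hainvne with h | ⟨s, hs, t, ht, hst⟩
  · exact absurd h hainv
  -- hst : a⁻¹ = s * t
  have h1 : a * s * t = 1 := by
    rw [mul_assoc, ← hst, mul_inv_cancel]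
  have hsta : s * t * a = 1 := by
    rw [← hst, inv_mul_cancel]
  -- t * a = s⁻¹ and  a * s = t⁻¹
  have hta : t * a = s⁻¹ := by
    have h := hsta
    rw [mul_assoc] at h
    exact (inv_eq_of_mul_eq_one_right h).symm
  have has' : a * s = t⁻¹ := mul_eq_one_iff_eq_inv.mp h1
  -- s, t ∈ S₂
  have hsS₂ : s ∈ S₂ := by
    rcases Finset.mem_union.mp hs with h | h
    · exact absurd (hta ▸ Finset.mem_union_left S₂ (hS₁inv' _ h)) (hD t ht a haS)
    · exact h
  have htS₂ : t ∈ S₂ := by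
    rcases Finset.mem_union.mp ht with h | h
    · exact absurd (has' ▸ Finset.mem_union_left S₂ (hS₁inv' _ h)) (hD a haS s hs)
    · exact h
  have hsne : s ≠ 1 := fun h => hone (h ▸ hs)
  have htne : t ≠ 1 := fun h => hone (h ▸ ht)
  -- squares of S₂ elements are not 1
  have hsq : ∀ x ∈ S₂, x * x ≠ 1 := by
    intro x hx hxx
    have hxinv : x⁻¹ = x := inv_eq_of_mul_eq_one_right hxx
    exact hinvS₂ x hx (by rw [hxinv]; exact Finset.mem_union_right S₁ hx)
  by_cases hcas : a = s
  · -- a = s : then t = a and a has order 3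
    left
    have h2 : a * t = a⁻¹ := by rw [hst, hcas]
    have ht' : t = a⁻¹ * a⁻¹ := by
      have h := congrArg (fun g => a⁻¹ * g) h2
      simpa [mul_assoc] using h
    have h3 : t * a = a⁻¹ := by rw [ht']; group
    have h4 : a * t ≠ 1 := by rw [h2]; exact hainvne
    have heq : a = t := (hU a t t a haS ht ht haS (by rw [h2, h3]) h4).1
    have hcube : a ^ 3 = 1 := by
      have h5 : a⁻¹ = a * a := by rw [hst, ← hcas, ← heq]
      have h6 : a * a * a = 1 := by rw [← h5, inv_mul_cancel]
      rw [pow_succ, pow_succ, pow_one]; exact h6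
    haveI : Fact (Nat.Prime 3) := ⟨by norm_num⟩
    exact orderOf_eq_prime hcube hane
  · by_cases hcat : a = t
    · -- a = t : forces s = a, contradiction
      exfalso
      have h2 : s * a = a⁻¹ := by rw [hst, ← hcat]
      have hs' : s = a⁻¹ * a⁻¹ := by
        have h := congrArg (fun g => g * a⁻¹) h2
        simpa [mul_assoc] using h
      have h3 : a * s = a⁻¹ := by rw [hs']; group
      have h4 : a * s ≠ 1 := by rw [h3]; exact hainvne
      exact hcas (hU a s s a haS hs hs haS (by rw [h2, h3]) h4).1
    · by_cases hcst : s = t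
      · -- s = t : forces a = t, contradiction
        exfalso
        have h2 : a * t * t = 1 := by rw [hcst] at h1; exact h1
        have h3 : a * t = t⁻¹ := mul_eq_one_iff_eq_inv.mp h2
        have h4 : t * a = t⁻¹ := mul_eq_one_iff_eq_inv.mp (by
          rw [mul_assoc, h3, mul_inv_cancel])
        have h5 : a * t ≠ 1 := by
          rw [h3]; simpa using htne
        exact hcat (hU a t t a haS ht ht haS (by rw [h3, h4]) h5).1
      · -- all distinct: the triple case
        right
        refine ⟨s, hsS₂, t, htS₂, hcas, hcat, hcst, ?_, ?_, ?_, h1⟩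
        · -- 4 ≤ orderOf a
          apply mmc_order_ge_four a hane (hsq a ha)
          intro hc
          have haa : a * a = a⁻¹ := mul_eq_one_iff_eq_inv.mp hc
          have : a = s := (hU a a s t haS haS hs ht (by rw [haa, hst]) (by rw [haa]; exact hainvne)).1
          exact hcas this
        · -- 4 ≤ orderOf s
          apply mmc_order_ge_four s hsne (hsq s hsS₂)
          intro hc
          have hss : s * s = s⁻¹ := mul_eq_one_iff_eq_inv.mp hc
          have hta' : t * a = s⁻¹ := hta
          have hne : s * s ≠ 1 := by rw [hss]; simpa using hsne
          have : s = t := (hU s s t a hs hs ht haS (by rw [hss, hta']) hne).1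
          exact hcst this
        · -- 4 ≤ orderOf t
          apply mmc_order_ge_four t htne (hsq t htS₂)
          intro hc
          have htt : t * t = t⁻¹ := mul_eq_one_iff_eq_inv.mp hc
          have hne : t * t ≠ 1 := by rw [htt]; simpa using htne
          have : t = a := (hU t t a s ht ht haS hs (by rw [htt, ← has']) hne).1
          exact hcat this.symm
end

section
/- Under the mixed Moore Cayley hypotheses, if 2(z + r) − √(4r − 3) > 9 (precisely: 2(z + r) > 9 and (2(z + r) − 9)² > 4r − 3), then G contains no abelian subgroup of index 2. -/
open scoped Pointwise

set_option maxHeartbeats 1000000 in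
/-- Under the mixed Moore Cayley hypotheses, if `2(z + r) − √(4r − 3) > 9` then `G` contains no abelian subgroup of index 2. -/
theorem mixed_moore_cayley_no_abelian_index_two {G : Type*} [Group G] [Fintype G] [DecidableEq G]
    (r z : ℕ) (hr : 0 < r) (hz : 0 < z)
    (S₁ S₂ : Finset G)
    (hcard : Fintype.card G = (z + r) ^ 2 + z + 1)
    (hone : (1 : G) ∉ S₁ ∪ S₂)
    (hdisj : Disjoint S₁ S₂)
    (hS₁inv : S₁⁻¹ = S₁) (hS₁card : S₁.card = r)
    (hS₂inv : S₂ ∩ S₂⁻¹ = ∅) (hS₂card : S₂.card = z)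
    (hdiam : ∀ g : G, g ≠ 1 →
      g ∈ S₁ ∪ S₂ ∨ ∃ s ∈ S₁ ∪ S₂, ∃ t ∈ S₁ ∪ S₂, g = s * t)
    (h9 : 9 < 2 * (z + r)) (h9' : 4 * r - 3 < (2 * (z + r) - 9) ^ 2) :
    ¬ ∃ H : Subgroup G, H.index = 2 ∧ ∀ a ∈ H, ∀ b ∈ H, a * b = b * a := by
  classical
  rintro ⟨H, hH2, hHab⟩
  set T : Finset G := S₁ ∪ S₂ with hT
  set k : ℕ := z + r with hk
  clear_value k
  have hTcard : T.card = k := by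
    rw [hT, Finset.card_union_of_disjoint hdisj, hS₁card, hS₂card]
    omega
  -- if u ∈ T and u⁻¹ ∈ T then u ∈ S₁
  have hinvS₁ : ∀ u ∈ T, u⁻¹ ∈ T → u ∈ S₁ := by
    intro u hu huinv
    rcases Finset.mem_union.1 hu with h1 | h2
    · exact h1
    rcases Finset.mem_union.1 huinv with h1 | h2'
    · exfalso
      have hm : u ∈ S₁ := by rw [← hS₁inv]; simpa using h1
      exact (Finset.disjoint_left.1 hdisj hm) h2
    · exfalso
      have hm : u ∈ S₂ ∩ S₂⁻¹ := Finset.mem_inter.2 ⟨h2, by simpa using h2'⟩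
      simp [hS₂inv] at hm
  -- pairs multiplying to 1
  have hker : ((T ×ˢ T).filter (fun p => p.1 * p.2 = 1)).card = r := by
    rw [← hS₁card]
    apply Finset.card_bij (fun p _ => p.1)
    · rintro ⟨u, v⟩ hp
      simp only [Finset.mem_filter, Finset.mem_product] at hp
      obtain ⟨⟨hu, hv⟩, huv⟩ := hp
      have hv' : v = u⁻¹ := eq_inv_of_mul_eq_one_right huv
      exact hinvS₁ u hu (hv' ▸ hv)
    · rintro ⟨u, v⟩ hp ⟨u', v'⟩ hp' h
      simp only [Finset.mem_filter, Finset.mem_product] at hp hp'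
      have hv' : v = u⁻¹ := eq_inv_of_mul_eq_one_right hp.2
      have hv'' : v' = u'⁻¹ := eq_inv_of_mul_eq_one_right hp'.2
      simp only at h
      simp [Prod.ext_iff, h, hv', hv'']
    · intro u hu
      refine ⟨(u, u⁻¹), ?_, rfl⟩
      have hu1 : u ∈ T := Finset.mem_union_left _ hu
      have hu2 : u⁻¹ ∈ T := Finset.mem_union_left _ (by rw [← hS₁inv]; simpa using hu)
      simp [Finset.mem_filter, Finset.mem_product, hu1, hu2]
  have hrk : r ≤ k ^ 2 := le_trans (by omega) (Nat.le_self_pow two_ne_zero k)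
  have hP : ((T ×ˢ T).filter (fun p => ¬ (p.1 * p.2 = 1))).card + r = k ^ 2 := by
    have hsplit := Finset.card_filter_add_card_filter_not
      (s := T ×ˢ T) (p := fun p : G × G => p.1 * p.2 = 1)
    beta_reduce at hsplit
    rw [hker, Finset.card_product, hTcard] at hsplit
    have hkk : k * k = k ^ 2 := by ring
    omega
  -- two distinct commuting elements of T with product ≠ 1 is impossible
  have hA1 : ∀ s ∈ T, ∀ t ∈ T, s ∈ H → t ∈ H → s ≠ t → s * t = 1 := by
    intro s hs t ht hsH htH hst
    by_contra hne
    set P := (T ×ˢ T).filter (fun p => ¬ (p.1 * p.2 = 1)) with hPdef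
    have hcomm : s * t = t * s := hHab s hsH t htH
    have hmem1 : (s, t) ∈ P := by
      simp [hPdef, Finset.mem_filter, Finset.mem_product, hs, ht, hne]
    have hmem2 : (t, s) ∈ P := by
      have hne' : ¬ (t * s = 1) := by rw [← hcomm]; exact hne
      simp [hPdef, Finset.mem_filter, Finset.mem_product, hs, ht, hne']
    have hmem1' : (s, t) ∈ P.erase (t, s) := by
      refine Finset.mem_erase.2 ⟨fun h => hst ?_, hmem1⟩
      simpa using congrArg Prod.fst h
    have himg : P.image (fun p => p.1 * p.2) ⊆
        (P.erase (t, s)).image (fun p => p.1 * p.2) := by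
      intro x hx
      obtain ⟨p, hp, hpx⟩ := Finset.mem_image.1 hx
      by_cases hpe : p = (t, s)
      · refine Finset.mem_image.2 ⟨(s, t), hmem1', ?_⟩
        rw [← hpx, hpe]
        exact hcomm
      · exact Finset.mem_image.2 ⟨p, Finset.mem_erase.2 ⟨hpe, hp⟩, hpx⟩
    have himgcard : (P.image (fun p => p.1 * p.2)).card + 1 ≤ P.card := by
      have h1 : (P.image (fun p => p.1 * p.2)).card ≤ (P.erase (t, s)).card :=
        le_trans (Finset.card_le_card himg) Finset.card_image_le
      have h2 : (P.erase (t, s)).card + 1 = P.card := Finset.card_erase_add_one hmem2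
      omega
    have hcover : Finset.univ.erase (1 : G) ⊆ T ∪ P.image (fun p => p.1 * p.2) := by
      intro g hg
      have hg1 : g ≠ 1 := (Finset.mem_erase.1 hg).1
      rcases hdiam g hg1 with h | ⟨u, hu, v, hv, huv⟩
      · exact Finset.mem_union_left _ h
      · refine Finset.mem_union_right _ (Finset.mem_image.2 ⟨(u, v), ?_, huv.symm⟩)
        simp only [hPdef, Finset.mem_filter, Finset.mem_product]
        exact ⟨⟨hu, hv⟩, by rw [← huv]; exact hg1⟩
    have hcard1 : (Finset.univ.erase (1 : G)).card = k ^ 2 + z := by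
      rw [Finset.card_erase_of_mem (Finset.mem_univ _), Finset.card_univ, hcard]
      omega
    have hle0 := Finset.card_le_card hcover
    have hle := le_trans hle0 (Finset.card_union_le _ _)
    rw [hcard1, hTcard] at hle
    have hPc : P.card + r = k ^ 2 := hP
    omega
  set A : Finset G := T.filter (fun x => x ∈ H) with hAdef
  set B : Finset G := T.filter (fun x => ¬ (x ∈ H)) with hBdef
  have hab : A.card + B.card = k := by
    rw [hAdef, hBdef, Finset.card_filter_add_card_filter_not, hTcard]
  have hAle : A.card ≤ 2 := by
    rcases A.eq_empty_or_nonempty with he | ⟨s, hsA⟩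
    · simp [he]
    · have hsT : s ∈ T := (Finset.mem_filter.1 hsA).1
      have hsH : s ∈ H := (Finset.mem_filter.1 hsA).2
      have hsub : A ⊆ {s, s⁻¹} := by
        intro t htA
        have htT : t ∈ T := (Finset.mem_filter.1 htA).1
        have htH : t ∈ H := (Finset.mem_filter.1 htA).2
        by_cases hts : t = s
        · simp [hts]
        · have h1 : s * t = 1 := hA1 s hsT t htT hsH htH (fun h => hts h.symm)
          have h2 : t = s⁻¹ := eq_inv_of_mul_eq_one_right h1
          simp [h2]
      calc A.card ≤ ({s, s⁻¹} : Finset G).card := Finset.card_le_card hsub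
        _ ≤ 2 := (Finset.card_insert_le _ _).trans (by simp)
  -- the non-H coset
  set C : Finset G := Finset.univ.filter (fun x => ¬ (x ∈ H)) with hCdef
  have hHcard : 2 * Nat.card H = Fintype.card G := by
    rw [← hH2, Subgroup.index_mul_card, Nat.card_eq_fintype_card]
  have hCcard : C.card + Nat.card H = Fintype.card G := by
    have hfil : (Finset.univ.filter (fun x => x ∈ H)).card = Nat.card H := by
      rw [Nat.card_eq_fintype_card, Fintype.card_subtype]
    rw [hCdef, ← hfil, add_comm]
    exact Finset.card_filter_add_card_filter_not _
  have hCsub : C ⊆ B ∪ (A * B ∪ B * A) := by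
    intro g hgC
    have hgH : ¬ (g ∈ H) := (Finset.mem_filter.1 hgC).2
    have hg1 : g ≠ 1 := fun h => hgH (h ▸ H.one_mem)
    rcases hdiam g hg1 with h | ⟨u, hu, v, hv, huv⟩
    · exact Finset.mem_union_left _ (Finset.mem_filter.2 ⟨h, hgH⟩)
    · have hnotiff : ¬ (u ∈ H ↔ v ∈ H) := by
        intro hiff
        exact hgH (huv ▸ (Subgroup.mul_mem_iff_of_index_two hH2).2 hiff)
      refine Finset.mem_union_right _ ?_
      by_cases huH : u ∈ H
      · have hvH : ¬ (v ∈ H) := fun h => hnotiff ⟨fun _ => h, fun _ => huH⟩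
        exact Finset.mem_union_left _ (huv ▸ Finset.mul_mem_mul
          (Finset.mem_filter.2 ⟨hu, huH⟩) (Finset.mem_filter.2 ⟨hv, hvH⟩))
      · have hvH : v ∈ H := by
          by_contra hvH
          exact hnotiff ⟨fun h => absurd h huH, fun h => absurd h hvH⟩
        exact Finset.mem_union_right _ (huv ▸ Finset.mul_mem_mul
          (Finset.mem_filter.2 ⟨hu, huH⟩) (Finset.mem_filter.2 ⟨hv, hvH⟩))
  have hCle : C.card ≤ B.card + (A.card * B.card + B.card * A.card) := by
    calc C.card ≤ (B ∪ (A * B ∪ B * A)).card := Finset.card_le_card hCsub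
      _ ≤ B.card + (A * B ∪ B * A).card := Finset.card_union_le _ _
      _ ≤ B.card + ((A * B).card + (B * A).card) :=
          Nat.add_le_add_left (Finset.card_union_le _ _) _
      _ ≤ B.card + (A.card * B.card + B.card * A.card) :=
          Nat.add_le_add_left (Nat.add_le_add Finset.card_mul_le Finset.card_mul_le) _
  -- final arithmetic
  have hn : 2 * Nat.card H = k ^ 2 + z + 1 := by rw [hHcard, hcard]
  have hCh : C.card = Nat.card H := by omega
  rw [hCh] at hCle
  have e1 : ((2 * k - 9 : ℕ) : ℤ) = 2 * (k : ℤ) - 9 := by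
    push_cast [Nat.cast_sub (by omega : 9 ≤ 2 * k)]
    ring
  have h9'' : 4 * (r : ℤ) - 3 < (2 * (k : ℤ) - 9) ^ 2 := by
    have h3 : (3 : ℕ) ≤ 4 * r := by omega
    zify [h3] at h9'
    rw [e1] at h9'
    exact h9'
  have habZ : (A.card : ℤ) + B.card = k := by exact_mod_cast hab
  have hCleZ : ((Nat.card H : ℕ) : ℤ) ≤ B.card + ((A.card : ℤ) * B.card + (B.card : ℤ) * A.card) := by
    exact_mod_cast hCle
  have hnZ : 2 * ((Nat.card H : ℕ) : ℤ) = (k : ℤ) ^ 2 + z + 1 := by exact_mod_cast hn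
  have hkZ : (k : ℤ) = z + r := by exact_mod_cast hk
  have hrZ : (1 : ℤ) ≤ r := by exact_mod_cast hr
  have hzZ : (1 : ℤ) ≤ z := by exact_mod_cast hz
  have h9Z : (9 : ℤ) < 2 * k := by exact_mod_cast h9
  have hacases : A.card = 0 ∨ A.card = 1 ∨ A.card = 2 := by omega
  have hsq : (2 * (k : ℤ) - 9) ^ 2 = 4 * (k : ℤ) ^ 2 - 36 * (k : ℤ) + 81 := by ring
  rw [hsq] at h9''
  rcases hacases with ha | ha | ha <;>
    rw [ha] at habZ hCleZ <;> push_cast at habZ hCleZ <;>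
    linarith [h9'', hnZ, habZ, hCleZ, hkZ, hrZ, hzZ, h9Z]
end

section
/- For every d ≥ 1, the Kautz digraph Ka(d, 2) is a mixed Moore graph of diameter 2 with undirected degree r = 1 and directed degree z = d − 1. Precisely, let V = {(a, b) ∈ Fin (d+1) × Fin (d+1) : a ≠ b} and define E (a,b) (x,y) ⟺ x = b. Then: |V| = d(d + 1) = ((d−1) + 1)² + (d−1) + 1; every vertex (a,b) has exactly one vertex w with E (a,b) w ∧ E w (a,b) (namely (b,a)) and exactly d − 1 vertices w with E (a,b) w ∧ ¬E w (a,b); and for all distinct u, v ∈ V, either E u v or there exists w ∈ V with E u w ∧ E w v. -/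
/-- The vertices of the Kautz digraph `Ka(d, 2)`: words of length 2 over an
alphabet of `d + 1` letters with distinct letters. -/
def KautzVertex (d : ℕ) : Type := {p : Fin (d + 1) × Fin (d + 1) // p.1 ≠ p.2}

instance (d : ℕ) : Fintype (KautzVertex d) := Subtype.fintype _

instance (d : ℕ) : DecidableEq (KautzVertex d) := Subtype.instDecidableEq

/-- Adjacency in the Kautz digraph `Ka(d, 2)`: there is an arc from `ab` to `bc`. -/
def KautzAdj (d : ℕ) (u v : KautzVertex d) : Prop := v.1.1 = u.1.2

instance (d : ℕ) : DecidableRel (KautzAdj d) := fun _ _ => decEq _ _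

/-! A vertex `ab` has the `d` out-neighbours `bc` with `c ≠ b`, and exactly one of them, `ba`,
is also an in-neighbour; any vertex `cx` is reached from `ab` either directly (`c = b`) or through
`bc`. -/

open Finset

theorem Fintype.card_subtype_fst_ne_snd (α : Type*) [Fintype α] [DecidableEq α] :
    Fintype.card {p : α × α // p.1 ≠ p.2} = Fintype.card α * (Fintype.card α - 1) := by
  have h : (univ.filter fun p : α × α => p.1 ≠ p.2) = (univ : Finset α).offDiag := by
    ext; simp
  rw [Fintype.card_subtype, h, offDiag_card, card_univ, Nat.mul_sub_one]

namespace KautzVertex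

variable {d : ℕ}

theorem card : Fintype.card (KautzVertex d) = d * (d + 1) := by
  rw [show Fintype.card (KautzVertex d) = _ from Fintype.card_subtype_fst_ne_snd (Fin (d + 1)),
    Fintype.card_fin, Nat.add_sub_cancel, mul_comm]

def reverse (u : KautzVertex d) : KautzVertex d := ⟨(u.1.2, u.1.1), u.2.symm⟩

theorem adj_and_adj_iff {u w : KautzVertex d} :
    KautzAdj d u w ∧ KautzAdj d w u ↔ w = u.reverse := by
  refine ⟨fun ⟨h₁, h₂⟩ => Subtype.ext (Prod.ext h₁ h₂.symm), ?_⟩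
  rintro rfl
  exact ⟨rfl, rfl⟩

theorem filter_adj_and_adj (u : KautzVertex d) :
    univ.filter (fun w => KautzAdj d u w ∧ KautzAdj d w u) = {u.reverse} := by
  ext w
  rw [mem_filter, mem_singleton, adj_and_adj_iff]
  exact and_iff_right (mem_univ w)

def outNeighborEquiv (u : KautzVertex d) : {w // KautzAdj d u w} ≃ {c // c ≠ u.1.2} where
  toFun w := ⟨w.1.1.2, fun h => w.1.2 (w.2.trans h.symm)⟩
  invFun c := ⟨⟨(u.1.2, c.1), Ne.symm c.2⟩, rfl⟩
  left_inv w := Subtype.ext <| Subtype.ext <| Prod.ext w.2.symm rfl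
  right_inv _ := rfl

theorem card_outNeighbors (u : KautzVertex d) : #(univ.filter (KautzAdj d u)) = d := by
  rw [← Fintype.card_subtype, Fintype.card_congr u.outNeighborEquiv, Fintype.card_subtype_compl,
    Fintype.card_subtype_eq, Fintype.card_fin, Nat.add_sub_cancel]

theorem card_directedOutNeighbors (u : KautzVertex d) :
    #(univ.filter fun w => KautzAdj d u w ∧ ¬ KautzAdj d w u) = d - 1 := by
  have h := card_filter_add_card_filter_not (s := univ.filter (KautzAdj d u))
    fun w => KautzAdj d w u
  rw [filter_filter, filter_filter, filter_adj_and_adj, card_singleton, card_outNeighbors] at h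
  omega

theorem adj_or_exists_adj_adj (u v : KautzVertex d) :
    KautzAdj d u v ∨ ∃ w, KautzAdj d u w ∧ KautzAdj d w v := by
  by_cases h : v.1.1 = u.1.2
  · exact Or.inl h
  · exact Or.inr ⟨⟨(u.1.2, v.1.1), Ne.symm h⟩, rfl, rfl⟩

end KautzVertex

/-- For every `d ≥ 1`, the Kautz digraph `Ka(d, 2)` is a mixed Moore graph of
diameter 2 with undirected degree `r = 1` and directed degree `z = d - 1`:
it has order `d(d+1) = ((d-1)+1)² + (d-1) + 1`, every vertex `(a, b)` has
exactly one undirected neighbour (namely `(b, a)`) and exactly `d - 1` purely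
directed out-neighbours, and it has diameter at most 2. -/
theorem kautz_is_mixed_moore (d : ℕ) (hd : 1 ≤ d) :
    Fintype.card (KautzVertex d) = d * (d + 1) ∧
    d * (d + 1) = ((d - 1) + 1) ^ 2 + (d - 1) + 1 ∧
    (∀ u : KautzVertex d,
      (Finset.univ.filter fun w => KautzAdj d u w ∧ KautzAdj d w u) =
        {⟨(u.1.2, u.1.1), u.2.symm⟩}) ∧
    (∀ u : KautzVertex d,
      (Finset.univ.filter fun w => KautzAdj d u w ∧ ¬ KautzAdj d w u).card = d - 1) ∧
    (∀ u v : KautzVertex d, u ≠ v →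
      KautzAdj d u v ∨ ∃ w : KautzVertex d, KautzAdj d u w ∧ KautzAdj d w v) := by
  refine ⟨KautzVertex.card, ?_, KautzVertex.filter_adj_and_adj,
    KautzVertex.card_directedOutNeighbors, fun u v _ => KautzVertex.adj_or_exists_adj_adj u v⟩
  · obtain ⟨n, rfl⟩ := Nat.exists_eq_add_of_le' hd
    simp only [Nat.add_sub_cancel]
    ring
end
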